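/- arXiv:1205.0626 — 8 statements merged into one kernel-verified Lean document; each statement's English description precedes it below -/
import Mathlib

section
/- Let w_j = (-1)^{j(j-1)/2} for j ∈ ℤ. Then for every even integer u and every finite set S of consecutive integers, |∑_{j∈S} w_j w_{u-j}| ≤ 1. -/
/-!
With `tri j = j (j - 1) / 2` one has the exact identity `tri j + tri (u - j) = tri u + j (j - u)`,
and for even `u` the correction `j (j - u)` has the parity of `j`. Hence every summand equals
`(-1)^(tri u) (-1)^j`, and a sum of alternating signs over consecutive integers lies in `[-1, 1]`.
-/

open Finset

section AlternatingSum

lemma two_mul_sum_Ico_neg_one_zpow {K : Type*} [Field K] {a b : ℤ} (hab : a ≤ b) :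
    2 * ∑ j ∈ Ico a b, (-1 : K) ^ j = (-1) ^ a - (-1) ^ b := by
  induction b, hab using Int.leInduction with
  | base => simp
  | succ b hab ih =>
    rw [← sum_Ico_add_eq_sum_Ico_add_one hab, mul_add, ih, zpow_add_one₀ (by simp)]
    ring

lemma abs_sum_Ico_neg_one_zpow_le_one {K : Type*} [Field K] [LinearOrder K]
    [IsStrictOrderedRing K] (a b : ℤ) : |∑ j ∈ Ico a b, (-1 : K) ^ j| ≤ 1 := by
  rcases le_or_gt a b with hab | hba
  · have h2 : |2 * ∑ j ∈ Ico a b, (-1 : K) ^ j| ≤ 2 := by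
      rw [two_mul_sum_Ico_neg_one_zpow hab]
      calc |(-1 : K) ^ a - (-1) ^ b| ≤ |(-1 : K) ^ a| + |(-1 : K) ^ b| := abs_sub _ _
        _ = 2 := by rw [abs_neg_one_zpow, abs_neg_one_zpow]; norm_num
    rw [abs_mul, abs_two] at h2
    linarith
  · simp [Ico_eq_empty_of_le hba.le]

end AlternatingSum

section Triangular

def tri (j : ℤ) : ℤ := j * (j - 1) / 2

lemma two_mul_tri (j : ℤ) : 2 * tri j = j * (j - 1) :=
  Int.two_mul_ediv_two_of_even (Int.even_mul_pred_self j)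

lemma tri_add_tri_sub (u j : ℤ) : tri j + tri (u - j) = tri u + j * (j - u) := by
  apply mul_left_cancel₀ (two_ne_zero : (2 : ℤ) ≠ 0)
  linear_combination two_mul_tri j + two_mul_tri (u - j) - two_mul_tri u

lemma neg_one_zpow_tri_mul_tri_sub {K : Type*} [DivisionRing K] {u : ℤ} (hu : Even u) (j : ℤ) :
    (-1 : K) ^ tri j * (-1) ^ tri (u - j) = (-1) ^ tri u * (-1) ^ j := by
  have hpar : Even (j * (j - u) - j) := by
    rw [show j * (j - u) - j = j * (j - 1) - j * u by ring]
    exact (Int.even_mul_pred_self j).sub (hu.mul_left j)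
  rw [← zpow_add₀ (by simp), ← zpow_add₀ (by simp), tri_add_tri_sub,
    show tri u + j * (j - u) = (j * (j - u) - j) + (tri u + j) by ring,
    zpow_add₀ (by simp), hpar.neg_one_zpow, one_mul]

end Triangular

theorem negaperiodic_weight_even_reflect_sum_bound
    (w : ℤ → ℝ) (hw : ∀ j : ℤ, w j = (-1 : ℝ) ^ (j * (j - 1) / 2))
    (u : ℤ) (hu : Even u) (a b : ℤ) :
    |∑ j ∈ Finset.Ico a b, w j * w (u - j)| ≤ 1 := by
  have hterm (j : ℤ) : w j * w (u - j) = (-1 : ℝ) ^ tri u * (-1) ^ j := by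
    rw [hw, hw]
    exact neg_one_zpow_tri_mul_tri_sub hu j
  simp_rw [hterm, ← mul_sum, abs_mul, abs_neg_one_zpow, one_mul]
  exact abs_sum_Ico_neg_one_zpow_le_one a b
end

section
/- Let n be a positive integer and ε_a = e^{2πia/n}. Then ∑_{a=1}^{n-1} 1/|1 - ε_a| ≤ n log n. -/
/-!
Since `‖1 - ε_a‖ = 2 sin (π a / n)` and Jordan's inequality `sin x ≥ 2 x / π` holds on
`[0, π / 2]`, each term is at most `(n / 4) (1 / a + 1 / (n - a))`. By the symmetry `a ↦ n - a`
the sum is then at most `(n / 2) H_{n-1} ≤ (n / 2) (1 + log (n - 1)) ≤ n log n`.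
-/

open Complex Real

lemma one_div_sin_le {x : ℝ} (hx0 : 0 < x) (hxπ : x < π) :
    1 / Real.sin x ≤ π / 2 * (1 / x + 1 / (π - x)) := by
  wlog hx : x ≤ π / 2 generalizing x
  · have := this (x := π - x) (by linarith) (by linarith) (by linarith)
    rwa [Real.sin_pi_sub, sub_sub_cancel, add_comm] at this
  have hπx : 0 < π - x := by linarith
  calc 1 / Real.sin x ≤ 1 / (2 / π * x) :=
        one_div_le_one_div_of_le (by positivity) (mul_le_sin hx0.le hx)
    _ = π / 2 * (1 / x) := by field_simp
    _ ≤ π / 2 * (1 / x + 1 / (π - x)) := by gcongr; exact le_add_of_nonneg_right (by positivity)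

lemma one_div_norm_one_sub_exp_le {n t : ℝ} (ht : 0 < t) (htn : t < n) :
    1 / ‖1 - exp (2 * π * I * t / n)‖ ≤ n / 4 * (1 / t + 1 / (n - t)) := by
  have hn : 0 < n := ht.trans htn
  set x := π * t / n with hx
  have hx0 : 0 < x := by positivity
  have hxπ : x < π := by rw [hx, div_lt_iff₀ hn]; nlinarith [pi_pos]
  have hnorm : ‖1 - exp (2 * π * I * t / n)‖ = 2 * Real.sin x := by
    rw [norm_sub_rev, show 2 * π * I * t / n = I * ((2 * x : ℝ) : ℂ) by rw [hx]; push_cast; ring,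
      norm_exp_I_mul_ofReal_sub_one, mul_div_cancel_left₀ _ two_ne_zero, norm_mul,
      Real.norm_two, Real.norm_of_nonneg (Real.sin_pos_of_pos_of_lt_pi hx0 hxπ).le]
  have hnt : 0 < n - t := by linarith
  calc 1 / ‖1 - exp (2 * π * I * t / n)‖ = 1 / 2 * (1 / Real.sin x) := by rw [hnorm]; ring
    _ ≤ 1 / 2 * (π / 2 * (1 / x + 1 / (π - x))) := by gcongr; exact one_div_sin_le hx0 hxπ
    _ = n / 4 * (1 / t + 1 / (n - t)) := by rw [hx]; field_simp; ring

section

open Finset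

lemma sum_Ico_one_div_sub_eq (n : ℕ) :
    ∑ a ∈ Ico 1 n, 1 / ((n : ℝ) - a) = ∑ a ∈ Ico 1 n, 1 / (a : ℝ) := by
  have reflect := sum_Ico_reflect (fun a ↦ 1 / (a : ℝ)) 1 n.le_succ
  simp only [Nat.add_sub_cancel, Nat.add_sub_cancel_left] at reflect
  rw [← reflect]
  refine sum_congr rfl fun a ha ↦ ?_
  rw [Nat.cast_sub (mem_Ico.mp ha).2.le]

lemma sum_Ico_one_div_eq_harmonic (n : ℕ) :
    ∑ a ∈ Ico 1 n, 1 / (a : ℝ) = harmonic (n - 1) := by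
  have hIco : Ico 1 n = Icc 1 (n - 1) := by ext; simp only [mem_Ico, mem_Icc]; omega
  rw [harmonic_eq_sum_Icc, hIco]
  push_cast
  simp only [one_div]

end

lemma harmonic_pred_le_two_mul_log (n : ℕ) : (harmonic (n - 1) : ℝ) ≤ 2 * Real.log n := by
  rcases Nat.lt_or_ge n 2 with hn | hn
  · interval_cases n <;> simp
  have hn' : (2 : ℝ) ≤ n := by exact_mod_cast hn
  have hcast : ((n - 1 : ℕ) : ℝ) = n - 1 := by push_cast [Nat.one_le_of_lt hn]; ring
  -- `e (n - 1) ≤ n ^ 2` because the discriminant `e ^ 2 - 4 e` is negative.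
  have hsq : Real.exp 1 * (n - 1) ≤ (n : ℝ) ^ 2 := by nlinarith [exp_one_lt_d9]
  calc (harmonic (n - 1) : ℝ) ≤ 1 + Real.log (n - 1 : ℕ) := harmonic_le_one_add_log _
    _ = Real.log (Real.exp 1 * (n - 1)) := by
        rw [Real.log_mul (Real.exp_pos 1).ne' (by linarith), Real.log_exp, hcast]
    _ ≤ Real.log ((n : ℝ) ^ 2) := Real.log_le_log (by nlinarith [Real.exp_pos 1]) hsq
    _ = 2 * Real.log n := by rw [Real.log_pow]; push_cast; ring

theorem sum_inv_abs_one_sub_root_of_unity_le_general (n : ℕ) :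
    ∑ a ∈ Finset.Ico 1 n,
        1 / ‖1 - Complex.exp (2 * Real.pi * Complex.I * a / n)‖
      ≤ n * Real.log n := by
  calc _ ≤ ∑ a ∈ Finset.Ico 1 n, (n : ℝ) / 4 * (1 / (a : ℝ) + 1 / ((n : ℝ) - a)) := by
        refine Finset.sum_le_sum fun a ha ↦ ?_
        obtain ⟨ha1, han⟩ := Finset.mem_Ico.mp ha
        exact_mod_cast one_div_norm_one_sub_exp_le (t := a) (n := n) (Nat.cast_pos.mpr ha1)
          (Nat.cast_lt.mpr han)
    _ = n / 2 * harmonic (n - 1) := by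
        rw [← Finset.mul_sum, Finset.sum_add_distrib, sum_Ico_one_div_sub_eq,
          sum_Ico_one_div_eq_harmonic]
        ring
    _ ≤ n / 2 * (2 * Real.log n) := by gcongr; exact harmonic_pred_le_two_mul_log n
    _ = n * Real.log n := by ring

theorem sum_inv_abs_one_sub_root_of_unity_le (n : ℕ) (hn : 0 < n) :
    ∑ a ∈ Finset.Ico 1 n,
        1 / ‖1 - Complex.exp (2 * Real.pi * Complex.I * a / n)‖
      ≤ n * Real.log n :=
  sum_inv_abs_one_sub_root_of_unity_le_general n
end

section
/- Let n be a positive integer, ε_a = e^{2πia/n}, u a positive integer, and h a nonnegative integer. For any set V of consecutive integers contained in [0, u), ∑_{a=1}^{n-1} |∑_{v∈V} v^h ε_a^v| ≤ 2 u^h n log n. -/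
/-!
Summation by parts against the nondecreasing weights `v ^ h` bounds each inner sum by
`2 u ^ h` times the largest partial sum of the geometric series in `ε_a`, which is at most
`2 / |ε_a - 1| = 1 / sin (π a / n)`. From `sin (π x) ≥ π x (1 - x)` on `[0, 1]` we get
`∑_a 1 / sin (π a / n) ≤ (2 n / π) H_{n-1}`, and `H_{n-1} ≤ (π / 2) log n` follows by induction
from `log (1 + x) ≥ 2 x / (x + 2)`.
-/

open Complex Real Finset

theorem norm_sum_range_smul_le_of_monotone {E : Type*} [SeminormedAddCommGroup E]
    [NormedSpace ℝ E] {f : ℕ → ℝ} {g : ℕ → E} {B : ℝ} {N : ℕ} (hf : Monotone f)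
    (hf₀ : 0 ≤ f 0) (hg : ∀ m ≤ N, ‖∑ i ∈ range m, g i‖ ≤ B) :
    ‖∑ i ∈ range N, f i • g i‖ ≤ 2 * f (N - 1) * B := by
  have hB : 0 ≤ B := by simpa using hg 0 N.zero_le
  have hf_nonneg (i : ℕ) : 0 ≤ f i := hf₀.trans (hf i.zero_le)
  have hf_step (i : ℕ) : 0 ≤ f (i + 1) - f i := sub_nonneg.2 (hf i.le_succ)
  rw [sum_range_by_parts]
  calc _ ≤ ‖f (N - 1) • ∑ i ∈ range N, g i‖
        + ‖∑ i ∈ range (N - 1), (f (i + 1) - f i) • ∑ j ∈ range (i + 1), g j‖ :=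
        norm_sub_le _ _
    _ ≤ f (N - 1) * B + ∑ i ∈ range (N - 1), (f (i + 1) - f i) * B := by
      gcongr
      · rw [norm_smul, Real.norm_of_nonneg (hf_nonneg _)]
        exact mul_le_mul_of_nonneg_left (hg N le_rfl) (hf_nonneg _)
      · refine (norm_sum_le _ _).trans (sum_le_sum fun i hi => ?_)
        rw [norm_smul, Real.norm_of_nonneg (hf_step i)]
        exact mul_le_mul_of_nonneg_left (hg _ (by rw [mem_range] at hi; omega)) (hf_step i)
    _ = (2 * f (N - 1) - f 0) * B := by rw [← sum_mul, sum_range_sub f]; ring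
    _ ≤ 2 * f (N - 1) * B := by nlinarith [mul_nonneg hf₀ hB]

theorem norm_geom_sum_le_of_norm_eq_one {K : Type*} [NormedDivisionRing K] {ζ : K}
    (hζ : ‖ζ‖ = 1) (hζ₁ : ζ ≠ 1) (m : ℕ) :
    ‖∑ i ∈ range m, ζ ^ i‖ ≤ 2 / ‖ζ - 1‖ := by
  rw [geom_sum_eq hζ₁, norm_div]
  gcongr
  calc ‖ζ ^ m - 1‖ ≤ ‖ζ ^ m‖ + ‖(1 : K)‖ := norm_sub_le _ _
    _ = 2 := by rw [norm_pow, hζ, one_pow, norm_one]; norm_num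

theorem norm_sum_Ico_intCast_pow_mul_zpow_le {K : Type*} [NormedField K] [NormedAlgebra ℝ K]
    {ζ : K} (hζ : ‖ζ‖ = 1) (hζ₁ : ζ ≠ 1) (h : ℕ) {σ τ u : ℤ} (hσ : 0 ≤ σ) (hτ : τ ≤ u)
    (hu : 0 ≤ u) :
    ‖∑ v ∈ Ico σ τ, (v : K) ^ h * ζ ^ v‖ ≤ 4 * (u : ℝ) ^ h / ‖ζ - 1‖ := by
  rcases le_or_gt τ σ with hτσ | hστ
  · rw [Ico_eq_empty_of_le hτσ, sum_empty, norm_zero]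
    positivity
  lift σ to ℕ using hσ
  set N := (τ - σ).toNat
  have hsum : ∑ v ∈ Ico (σ : ℤ) τ, (v : K) ^ h * ζ ^ v
      = ∑ k ∈ range N, (((σ + k : ℕ) : ℝ) ^ h) • ζ ^ (σ + k) := by
    rw [Int.Ico_eq_finset_map, sum_map]
    refine sum_congr rfl fun k _ => ?_
    simp only [Function.Embedding.trans_apply, Nat.castEmbedding_apply, addLeftEmbedding_apply]
    rw [Algebra.smul_def, map_pow, map_natCast, ← zpow_natCast ζ (σ + k)]
    push_cast
    rfl
  have hpartial (m : ℕ) : ‖∑ k ∈ range m, ζ ^ (σ + k)‖ ≤ 2 / ‖ζ - 1‖ := by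
    simp_rw [pow_add, ← mul_sum, norm_mul, norm_pow, hζ, one_pow, one_mul]
    exact norm_geom_sum_le_of_norm_eq_one hζ hζ₁ m
  have hlast : ((σ + (N - 1) : ℕ) : ℝ) ^ h ≤ (u : ℝ) ^ h := by
    gcongr
    exact_mod_cast (show ((σ + (N - 1) : ℕ) : ℤ) ≤ u by omega)
  rw [hsum]
  refine (norm_sum_range_smul_le_of_monotone (fun i j hij => ?_) (by positivity)
    fun m _ => hpartial m).trans ?_
  · gcongr
  · calc 2 * ((σ + (N - 1) : ℕ) : ℝ) ^ h * (2 / ‖ζ - 1‖)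
        = 4 * ((σ + (N - 1) : ℕ) : ℝ) ^ h / ‖ζ - 1‖ := by ring
      _ ≤ 4 * (u : ℝ) ^ h / ‖ζ - 1‖ := by gcongr

theorem sin_pi_mul_div_pos {a n : ℕ} (ha : 0 < a) (han : a < n) :
    0 < Real.sin (π * a / n) := by
  have hn : (0 : ℝ) < n := by exact_mod_cast ha.trans han
  refine sin_pos_of_pos_of_lt_pi (by positivity) ?_
  rw [mul_div_assoc]
  exact mul_lt_of_lt_one_right pi_pos ((div_lt_one hn).2 (by exact_mod_cast han))

theorem norm_exp_two_pi_I_mul_div_sub_one {a n : ℕ} (ha : 0 < a) (han : a < n) :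
    ‖Complex.exp (2 * π * I * a / n) - 1‖ = 2 * Real.sin (π * a / n) := by
  rw [show 2 * π * I * a / n = I * ((2 * π * a / n : ℝ) : ℂ) by push_cast; ring,
    norm_exp_I_mul_ofReal_sub_one, show 2 * π * a / n / 2 = π * a / n by ring,
    Real.norm_of_nonneg (by have := sin_pi_mul_div_pos ha han; positivity)]

theorem norm_sum_Ico_intCast_pow_mul_exp_le {a n : ℕ} (ha : 0 < a) (han : a < n) (h : ℕ)
    {σ τ u : ℤ} (hσ : 0 ≤ σ) (hτ : τ ≤ u) (hu : 0 ≤ u) :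
    ‖∑ v ∈ Ico σ τ, (v : ℂ) ^ h * Complex.exp (2 * π * I * a * v / n)‖
      ≤ 2 * (u : ℝ) ^ h / Real.sin (π * a / n) := by
  have hε : ‖Complex.exp (2 * π * I * a / n)‖ = 1 := by
    rw [show 2 * π * I * a / n = ((2 * π * a / n : ℝ) : ℂ) * I by push_cast; ring,
      norm_exp_ofReal_mul_I]
  have hε₁ := norm_exp_two_pi_I_mul_div_sub_one ha han
  have hε_ne : Complex.exp (2 * π * I * a / n) ≠ 1 := by
    rw [← sub_ne_zero, ← norm_ne_zero_iff, hε₁]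
    exact (mul_pos two_pos (sin_pi_mul_div_pos ha han)).ne'
  have hpow (v : ℤ) :
      Complex.exp (2 * π * I * a * v / n) = Complex.exp (2 * π * I * a / n) ^ v := by
    rw [← exp_int_mul]
    ring_nf
  simp_rw [hpow]
  calc _ ≤ 4 * (u : ℝ) ^ h / ‖Complex.exp (2 * π * I * a / n) - 1‖ :=
        norm_sum_Ico_intCast_pow_mul_zpow_le hε hε_ne h hσ hτ hu
    _ = _ := by rw [hε₁]; ring

theorem Real.pi_mul_mul_one_sub_le_sin_pi_mul {x : ℝ} (hx₀ : 0 ≤ x) (hx₁ : x ≤ 1) :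
    π * x * (1 - x) ≤ sin (π * x) := by
  wlog hx : x ≤ 1 / 2 generalizing x
  · have := this (x := 1 - x) (by linarith) (by linarith) (by linarith)
    rw [show π * (1 - x) = π - π * x by ring, sin_pi_sub] at this
    linarith
  -- `sin y ≥ y - y ^ 3 / 6 ≥ y - y ^ 2 / π` for `y = π x ≤ π / 2`, because `π ^ 2 < 12`
  have hπ : π < 3.15 := pi_lt_d2
  have h6 : 0 ≤ 6 - π ^ 2 * x := by nlinarith [pi_pos]
  nlinarith [sin_ge_sub_cube (x := π * x) (by positivity),
    mul_nonneg pi_pos.le (mul_nonneg (sq_nonneg x) h6)]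

theorem Real.one_div_sin_pi_mul_le {x : ℝ} (hx₀ : 0 < x) (hx₁ : x < 1) :
    1 / sin (π * x) ≤ (1 / x + 1 / (1 - x)) / π := by
  have hx₁' : 0 < 1 - x := by linarith
  have hpos : 0 < π * x * (1 - x) := by have := pi_pos; positivity
  calc 1 / sin (π * x) ≤ 1 / (π * x * (1 - x)) :=
        one_div_le_one_div_of_le hpos (pi_mul_mul_one_sub_le_sin_pi_mul hx₀.le hx₁.le)
    _ = _ := by field_simp; ring

theorem harmonic_le_pi_div_two_mul_log_succ (n : ℕ) :
    (harmonic n : ℝ) ≤ π / 2 * Real.log (n + 1) := by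
  induction n with
  | zero => simp
  | succ k ih =>
    have hk : (0 : ℝ) < k + 1 := by positivity
    have hlog : Real.log ((k + 1 : ℕ) + 1 : ℝ)
        = Real.log (k + 1) + Real.log (1 + (k + 1 : ℝ)⁻¹) := by
      rw [← Real.log_mul hk.ne' (by positivity)]
      congr 1
      push_cast
      field_simp
    have hstep := le_log_one_add_of_nonneg (inv_nonneg.2 hk.le)
    have hπ : 3 < π := pi_gt_three
    have hx : (k + 1 : ℝ)⁻¹ ≤ 1 := inv_le_one_of_one_le₀ (by linarith)
    have hinv : (k + 1 : ℝ)⁻¹ ≤ π / 2 * (2 * (k + 1 : ℝ)⁻¹ / ((k + 1 : ℝ)⁻¹ + 2)) := by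
      rw [mul_div_assoc', le_div_iff₀ (by positivity)]
      nlinarith [inv_pos.2 hk]
    rw [harmonic_succ, hlog]
    push_cast
    nlinarith [mul_le_mul_of_nonneg_left hstep pi_pos.le]

theorem sum_Ico_inv_add_inv_sub_eq_two_mul_harmonic (m : ℕ) :
    ∑ a ∈ Ico 1 (m + 1), ((a : ℝ)⁻¹ + ((m + 1 : ℕ) - a : ℝ)⁻¹) = 2 * harmonic m := by
  have hreflect : ∑ a ∈ Ico 1 (m + 1), ((m + 1 : ℕ) - a : ℝ)⁻¹
      = ∑ a ∈ Ico 1 (m + 1), (a : ℝ)⁻¹ := by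
    have := sum_Ico_reflect (fun a : ℕ => (a : ℝ)⁻¹) 1 (show m + 1 ≤ m + 1 + 1 by omega)
    rw [show m + 1 + 1 - (m + 1) = 1 by omega, Nat.add_sub_cancel] at this
    rw [← this]
    refine sum_congr rfl fun a ha => ?_
    rw [Nat.cast_sub (mem_Ico.1 ha).2.le]
  rw [sum_add_distrib, hreflect, ← two_mul, harmonic_eq_sum_Icc, ← Ico_add_one_right_eq_Icc]
  push_cast
  rfl

theorem sum_one_div_sin_pi_mul_div_le_mul_log (n : ℕ) :
    ∑ a ∈ Ico 1 n, 1 / Real.sin (π * a / n) ≤ n * Real.log n := by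
  obtain _ | m := n
  · simp
  calc ∑ a ∈ Ico 1 (m + 1), 1 / Real.sin (π * a / (m + 1 : ℕ))
      ≤ ∑ a ∈ Ico 1 (m + 1), (m + 1 : ℕ) / π * ((a : ℝ)⁻¹ + ((m + 1 : ℕ) - a : ℝ)⁻¹) := by
        refine sum_le_sum fun a ha => ?_
        rw [mem_Ico] at ha
        have ha₀ : (0 : ℝ) < a := by exact_mod_cast ha.1
        have ham : (a : ℝ) < (m + 1 : ℕ) := by exact_mod_cast ha.2
        have hm : (0 : ℝ) < (m + 1 : ℕ) := ha₀.trans ham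
        have := one_div_sin_pi_mul_le (div_pos ha₀ hm) ((div_lt_one hm).2 ham)
        rw [mul_div_assoc]
        refine this.trans_eq ?_
        field_simp
    _ = (m + 1 : ℕ) / π * (2 * harmonic m) := by
        rw [← mul_sum, sum_Ico_inv_add_inv_sub_eq_two_mul_harmonic]
    _ ≤ (m + 1 : ℕ) / π * (2 * (π / 2 * Real.log (m + 1))) := by
        gcongr
        exact harmonic_le_pi_div_two_mul_log_succ m
    _ = _ := by
        push_cast
        have := pi_ne_zero
        field_simp

theorem sum_abs_weighted_geometric_le_general (n : ℕ) (u : ℤ) (hu : 0 < u)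
    (h : ℕ) (σ τ : ℤ) (hσ : 0 ≤ σ) (hτ : τ ≤ u) :
    ∑ a ∈ Finset.Ico 1 n,
        ‖∑ v ∈ Finset.Ico σ τ,
          (v : ℂ) ^ h * Complex.exp (2 * Real.pi * Complex.I * a * v / n)‖
      ≤ 2 * (u : ℝ) ^ h * n * Real.log n := by
  calc _ ≤ ∑ a ∈ Ico 1 n, 2 * (u : ℝ) ^ h * (1 / Real.sin (π * a / n)) :=
        sum_le_sum fun a ha => by
          rw [mul_one_div]
          exact norm_sum_Ico_intCast_pow_mul_exp_le (mem_Ico.1 ha).1 (mem_Ico.1 ha).2 h hσ hτ hu.le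
    _ = 2 * (u : ℝ) ^ h * ∑ a ∈ Ico 1 n, 1 / Real.sin (π * a / n) := (mul_sum _ _ _).symm
    _ ≤ 2 * (u : ℝ) ^ h * (n * Real.log n) :=
        mul_le_mul_of_nonneg_left (sum_one_div_sin_pi_mul_div_le_mul_log n) (by positivity)
    _ = _ := by ring

theorem sum_abs_weighted_geometric_le (n : ℕ) (hn : 0 < n) (u : ℤ) (hu : 0 < u)
    (h : ℕ) (σ τ : ℤ) (hσ : 0 ≤ σ) (hτ : τ ≤ u) :
    ∑ a ∈ Finset.Ico 1 n,
        ‖∑ v ∈ Finset.Ico σ τ,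
          (v : ℂ) ^ h * Complex.exp (2 * Real.pi * Complex.I * a * v / n)‖
      ≤ 2 * (u : ℝ) ^ h * n * Real.log n :=
  sum_abs_weighted_geometric_le_general n u hu h σ τ hσ hτ
end

section
/- Let n be a positive integer, ε_k = e^{2πik/n}, and let I_1, I_2, I_3, I_4 each be a finite set of at most L consecutive integers. Then ∑_{a,b,c ∈ ℤ/nℤ} |∑_{(i_1,i_2,i_3,i_4) ∈ I_1×I_2×I_3×I_4, i_1+i_2=i_3+i_4} ε_a^{i_2} ε_b^{i_3} ε_c^{i_4}| ≤ 936 max(n,L)^3 (1 + log n)^3. -/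
/-!
For `‖z‖ = 1` a sum of `z ^ i` over an interval of at most `L` integers has norm at most
`geomBound L z = min L (2 / ‖z - 1‖)`. Summation by parts in the outer variable extends this to
sums of `χ t * x ^ i` over strips `i - φ t ∈ [u, v)`: the norm is at most `geomBound L x` times
the sum of the bounds for the strip sums of `χ` and of `χ t * x ^ φ t`. Writing
`i₁ = i₃ - (i₂ - i₄)` and applying this twice bounds the inner sum for `(ε_a, ε_b, ε_c)` by four
products of three values `g k = geomBound L (ε_k)` at shifted indices. Summed over `a, b, c` each
product gives `G ^ 3` with `G = ∑ₖ g k ≤ L + n (1 + log n)`, because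
`g k ≤ 1 / sin (π k / n) ≤ (n / k + n / (n - k)) / 2`.
-/

open Complex Real

open Finset

variable {𝕜 : Type*} [NormedField 𝕜]

open Classical in
noncomputable def geomBound (L : ℕ) (z : 𝕜) : ℝ :=
  if z = 1 then L else min (L : ℝ) (2 / ‖z - 1‖)

lemma geomBound_nonneg (L : ℕ) (z : 𝕜) : 0 ≤ geomBound L z := by
  unfold geomBound
  split_ifs <;> positivity

lemma geomBound_one (L : ℕ) : geomBound L (1 : 𝕜) = L := if_pos rfl

lemma geomBound_le_two_div {L : ℕ} {z : 𝕜} (hz : z ≠ 1) : geomBound L z ≤ 2 / ‖z - 1‖ := by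
  rw [geomBound, if_neg hz]
  exact min_le_right _ _

lemma le_geomBound_mul {L : ℕ} {z : 𝕜} {r C : ℝ} (hC : 0 ≤ C) (hL : r ≤ L * C)
    (hz : z ≠ 1 → ‖z - 1‖ * r ≤ 2 * C) : r ≤ geomBound L z * C := by
  unfold geomBound
  split_ifs with h
  · exact hL
  · have hpos : 0 < ‖z - 1‖ := norm_pos_iff.2 (sub_ne_zero.2 h)
    rw [min_mul_of_nonneg _ _ hC, div_mul_eq_mul_div, le_min_iff, le_div_iff₀ hpos]
    exact ⟨hL, by linarith [hz h]⟩

lemma sub_one_mul_sum_Ico_zpow {K : Type*} [Field K] {x : K} (hx : x ≠ 0) {a b : ℤ} (hab : a ≤ b) :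
    (x - 1) * ∑ i ∈ Ico a b, x ^ i = x ^ b - x ^ a := by
  induction b, hab using Int.leInduction with
  | base => simp
  | succ b hb ih =>
    rw [← insert_Ico_right_eq_Ico_add_one hb, sum_insert right_notMem_Ico, mul_add, ih,
      zpow_add_one₀ hx]
    ring

lemma sub_one_mul_sum_Ico_zpow_mul {K : Type*} [Field K] {x : K} (hx : x ≠ 0) (A : ℤ → K)
    {a b : ℤ} (hab : a < b) :
    (x - 1) * ∑ i ∈ Ico a b, x ^ i * A i =
      x ^ b * A (b - 1) - x ^ a * A a + ∑ i ∈ Ico (a + 1) b, x ^ i * (A (i - 1) - A i) := by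
  induction b, Int.add_one_le_iff.2 hab using Int.leInduction with
  | base =>
    rw [Ico_add_one_right_eq_Icc, Icc_self, sum_singleton, Ico_self, sum_empty, zpow_add_one₀ hx,
      add_sub_cancel_right]
    ring
  | succ b hb ih =>
    rw [← insert_Ico_right_eq_Ico_add_one (by omega), sum_insert right_notMem_Ico, mul_add,
      ih (by omega), ← insert_Ico_right_eq_Ico_add_one hb, sum_insert right_notMem_Ico,
      zpow_add_one₀ hx, add_sub_cancel_right]
    ring

lemma norm_sum_Ico_zpow_le_geomBound {x : 𝕜} (hx : ‖x‖ = 1) {L : ℕ} {a b : ℤ}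
    (hab : b - a ≤ L) : ‖∑ i ∈ Ico a b, x ^ i‖ ≤ geomBound L x := by
  have hx0 : x ≠ 0 := norm_ne_zero_iff.1 (by rw [hx]; exact one_ne_zero)
  rw [← mul_one (geomBound L x)]
  refine le_geomBound_mul zero_le_one ?_ fun _ => ?_
  · calc ‖∑ i ∈ Ico a b, x ^ i‖ ≤ ∑ i ∈ Ico a b, ‖x ^ i‖ := norm_sum_le _ _
      _ = (b - a).toNat := by simp [norm_zpow, hx]
      _ ≤ L * 1 := by rw [mul_one]; exact_mod_cast (by omega : (b - a).toNat ≤ L)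
  rcases le_total a b with h | h
  · rw [← norm_mul, sub_one_mul_sum_Ico_zpow hx0 h]
    calc ‖x ^ b - x ^ a‖ ≤ ‖x ^ b‖ + ‖x ^ a‖ := norm_sub_le _ _
      _ = 2 * 1 := by rw [norm_zpow, norm_zpow, hx, one_zpow, one_zpow]; norm_num
  · simp [Ico_eq_empty_of_le h]

section Strip

variable {ι : Type*} (s : Finset ι) (φ : ι → ℤ) (χ : ι → 𝕜)

lemma sum_filter_sub_one_sub_mem_Ico_sub {u v : ℤ} (huv : u ≤ v) (i : ℤ) :
    (∑ t ∈ s with i - 1 - φ t ∈ Ico u v, χ t) - ∑ t ∈ s with i - φ t ∈ Ico u v, χ t =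
      (∑ t ∈ s with φ t = i - v, χ t) - ∑ t ∈ s with φ t = i - u, χ t := by
  simp only [sum_filter, ← sum_sub_distrib, mem_Ico]
  refine sum_congr rfl fun t _ => ?_
  split_ifs <;> first | ring1 | (exfalso; omega)

lemma sum_Ico_zpow_mul_sum_filter_eq {x : 𝕜} (hx : x ≠ 0) (a b w : ℤ) :
    ∑ i ∈ Ico a b, x ^ i * ∑ t ∈ s with φ t = i - w, χ t =
      x ^ w * ∑ t ∈ s with φ t ∈ Ico (a - w) (b - w), χ t * x ^ φ t := by
  simp only [mul_sum, sum_filter]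
  rw [sum_comm]
  refine sum_congr rfl fun t _ => ?_
  have key : ∀ i, φ t = i - w ↔ φ t + w = i := fun i => by omega
  simp only [key, mul_ite, mul_zero, sum_ite_eq, mem_Ico]
  split_ifs <;> first | rfl | (exfalso; omega) | (rw [zpow_add₀ hx]; ring)

lemma sum_product_Ico_filter_eq (x : 𝕜) (a b u v : ℤ) :
    ∑ p ∈ s ×ˢ Ico a b with p.2 - φ p.1 ∈ Ico u v, χ p.1 * x ^ p.2 =
      ∑ i ∈ Ico a b, x ^ i * ∑ t ∈ s with i - φ t ∈ Ico u v, χ t := by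
  rw [sum_filter, sum_product_right]
  simp only [sum_filter, mul_sum, mul_ite, mul_zero, mul_comm]

lemma norm_sum_filter_sub_mem_Ico_le {K₀ : ℝ}
    (h₀ : ∀ p q, ‖∑ t ∈ s with φ t ∈ Ico p q, χ t‖ ≤ K₀) (i u v : ℤ) :
    ‖∑ t ∈ s with i - φ t ∈ Ico u v, χ t‖ ≤ K₀ := by
  convert h₀ (i - v + 1) (i - u + 1) using 3
  exact filter_congr fun t _ => by simp only [mem_Ico]; omega

lemma norm_sub_one_mul_sum_Ico_zpow_mul_le {x : 𝕜} (hx : ‖x‖ = 1) {K₀ K₁ : ℝ}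
    (h₀ : ∀ p q, ‖∑ t ∈ s with φ t ∈ Ico p q, χ t‖ ≤ K₀)
    (h₁ : ∀ p q, ‖∑ t ∈ s with φ t ∈ Ico p q, χ t * x ^ φ t‖ ≤ K₁) (a b u v : ℤ) :
    ‖x - 1‖ * ‖∑ i ∈ Ico a b, x ^ i * ∑ t ∈ s with i - φ t ∈ Ico u v, χ t‖ ≤ 2 * (K₀ + K₁) := by
  have hx0 : x ≠ 0 := norm_ne_zero_iff.1 (by rw [hx]; exact one_ne_zero)
  have hxk : ∀ (k : ℤ) (z : 𝕜), ‖x ^ k * z‖ = ‖z‖ := by simp [norm_zpow, hx]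
  have hK₀ : 0 ≤ K₀ := (norm_nonneg _).trans (h₀ 0 0)
  have hK₁ : 0 ≤ K₁ := (norm_nonneg _).trans (h₁ 0 0)
  have hK : 0 ≤ 2 * (K₀ + K₁) := by positivity
  rcases lt_or_ge v u with hvu | huv
  · simpa [Ico_eq_empty_of_le hvu.le] using hK
  rcases le_or_gt b a with hba | hab
  · simpa [Ico_eq_empty_of_le hba] using hK
  rw [← norm_mul, sub_one_mul_sum_Ico_zpow_mul hx0 _ hab]
  simp only [sum_filter_sub_one_sub_mem_Ico_sub s φ χ huv, mul_sub, sum_sub_distrib,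
    sum_Ico_zpow_mul_sum_filter_eq s φ χ hx0]
  calc _ ≤ ‖x ^ b * _‖ + ‖x ^ a * _‖ + (‖x ^ v * _‖ + ‖x ^ u * _‖) :=
        (norm_add_le _ _).trans (add_le_add (norm_sub_le _ _) (norm_sub_le _ _))
    _ ≤ K₀ + K₀ + (K₁ + K₁) := by
        simp only [hxk]
        gcongr
        exacts [norm_sum_filter_sub_mem_Ico_le s φ χ h₀ _ _ _,
          norm_sum_filter_sub_mem_Ico_le s φ χ h₀ _ _ _, h₁ _ _, h₁ _ _]
    _ = 2 * (K₀ + K₁) := by ring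

theorem norm_sum_product_Ico_filter_le {x : 𝕜} (hx : ‖x‖ = 1) {L : ℕ} {a b : ℤ}
    (hab : b - a ≤ L) {K₀ K₁ : ℝ} (h₀ : ∀ p q, ‖∑ t ∈ s with φ t ∈ Ico p q, χ t‖ ≤ K₀)
    (h₁ : ∀ p q, ‖∑ t ∈ s with φ t ∈ Ico p q, χ t * x ^ φ t‖ ≤ K₁) (u v : ℤ) :
    ‖∑ p ∈ s ×ˢ Ico a b with p.2 - φ p.1 ∈ Ico u v, χ p.1 * x ^ p.2‖ ≤
      geomBound L x * (K₀ + K₁) := by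
  have hK₁ : 0 ≤ K₁ := (norm_nonneg _).trans (h₁ 0 0)
  rw [sum_product_Ico_filter_eq]
  refine le_geomBound_mul ((norm_nonneg _).trans ((h₀ 0 0).trans (le_add_of_nonneg_right hK₁)))
    ?_ fun _ => norm_sub_one_mul_sum_Ico_zpow_mul_le s φ χ hx h₀ h₁ a b u v
  calc _ ≤ ∑ i ∈ Ico a b, K₀ := norm_sum_le_of_le _ fun i _ => by
        rw [norm_mul, norm_zpow, hx, one_zpow, one_mul]
        exact norm_sum_filter_sub_mem_Ico_le s φ χ h₀ i u v
    _ = (b - a).toNat * K₀ := by rw [sum_const, Int.card_Ico, nsmul_eq_mul]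
    _ ≤ L * (K₀ + K₁) := by
        gcongr
        · exact (norm_nonneg _).trans (h₀ 0 0)
        · exact_mod_cast (by omega : (b - a).toNat ≤ L)
        · linarith

end Strip

theorem norm_sum_Ico_product_Ico_filter_le {x y : 𝕜} (hx : ‖x‖ = 1) (hy : ‖y‖ = 1) {L : ℕ}
    {a b c d : ℤ} (hab : b - a ≤ L) (hcd : d - c ≤ L) (u v : ℤ) :
    ‖∑ p ∈ Ico a b ×ˢ Ico c d with p.2 - p.1 ∈ Ico u v, y ^ p.1 * x ^ p.2‖ ≤
      geomBound L x * (geomBound L y + geomBound L (y * x)) := by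
  have hsub : ∀ z : 𝕜, ‖z‖ = 1 → ∀ p q, ‖∑ t ∈ Ico a b with t ∈ Ico p q, z ^ t‖ ≤ geomBound L z :=
    fun z hz p q => by
      rw [show {t ∈ Ico a b | t ∈ Ico p q} = Ico (max a p) (min b q) by
        ext; simp only [mem_filter, mem_Ico]; omega]
      exact norm_sum_Ico_zpow_le_geomBound hz (by omega)
  refine norm_sum_product_Ico_filter_le (Ico a b) (fun t => t) (y ^ ·) hx hcd (hsub y hy)
    (fun p q => ?_) u v
  simpa only [← mul_zpow] using hsub _ (by rw [norm_mul, hx, hy, one_mul]) p q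

theorem norm_sum_Ico_product_Ico_product_Ico_filter_le {x y w : 𝕜} (hx : ‖x‖ = 1) (hy : ‖y‖ = 1)
    (hw : ‖w‖ = 1) {L : ℕ} {a₂ b₂ a₃ b₃ a₄ b₄ : ℤ} (h₂ : b₂ - a₂ ≤ L) (h₃ : b₃ - a₃ ≤ L)
    (h₄ : b₄ - a₄ ≤ L) (u v : ℤ) :
    ‖∑ q ∈ (Ico a₄ b₄ ×ˢ Ico a₂ b₂) ×ˢ Ico a₃ b₃ with q.2 - (q.1.2 - q.1.1) ∈ Ico u v,
        w ^ q.1.1 * x ^ q.1.2 * y ^ q.2‖ ≤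
      geomBound L y * (geomBound L x * (geomBound L w + geomBound L (w * x)) +
        geomBound L (x * y) * (geomBound L (w / y) + geomBound L (w * x))) := by
  have hy0 : y ≠ 0 := norm_ne_zero_iff.1 (by rw [hy]; exact one_ne_zero)
  have hwy : ‖w / y‖ = 1 := by rw [norm_div, hw, hy, div_one]
  have hxy : ‖x * y‖ = 1 := by rw [norm_mul, hx, hy, one_mul]
  have h₁ : ∀ p q, ‖∑ t ∈ Ico a₄ b₄ ×ˢ Ico a₂ b₂ with t.2 - t.1 ∈ Ico p q,
      w ^ t.1 * x ^ t.2 * y ^ (t.2 - t.1)‖ ≤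
      geomBound L (x * y) * (geomBound L (w / y) + geomBound L (w * x)) := fun p q => by
    have key := norm_sum_Ico_product_Ico_filter_le hxy hwy h₄ h₂ p q
    rw [show w / y * (x * y) = w * x by field_simp] at key
    refine le_of_eq_of_le (congrArg norm (sum_congr rfl fun t _ => ?_)) key
    rw [div_zpow, mul_zpow, zpow_sub₀ hy0]
    field_simp
  exact norm_sum_product_Ico_filter_le (Ico a₄ b₄ ×ˢ Ico a₂ b₂) (fun p => p.2 - p.1)
    (fun p => w ^ p.1 * x ^ p.2) hy h₃ (norm_sum_Ico_product_Ico_filter_le hx hw h₄ h₂) h₁ u v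

lemma sum_filter_add_eq_add {M : Type*} [AddCommMonoid M] (s₁ s₂ s₃ s₄ : Finset ℤ)
    (f : ℤ → ℤ → ℤ → M) :
    ∑ i ∈ (s₁ ×ˢ s₂) ×ˢ (s₃ ×ˢ s₄) with i.1.1 + i.1.2 = i.2.1 + i.2.2, f i.1.2 i.2.1 i.2.2 =
      ∑ q ∈ (s₄ ×ˢ s₂) ×ˢ s₃ with q.2 - (q.1.2 - q.1.1) ∈ s₁, f q.1.2 q.2 q.1.1 := by
  refine sum_nbij' (fun i => ((i.2.2, i.1.2), i.2.1))
    (fun q => ((q.2 - (q.1.2 - q.1.1), q.1.2), (q.2, q.1.1))) ?_ ?_ ?_ ?_ fun _ _ => rfl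
  · rintro ⟨⟨i₁, i₂⟩, i₃, i₄⟩ hi
    simp only [mem_filter, mem_product] at hi ⊢
    obtain ⟨⟨⟨h₁, h₂⟩, h₃, h₄⟩, he⟩ := hi
    exact ⟨⟨⟨h₄, h₂⟩, h₃⟩, by rwa [show i₃ - (i₂ - i₄) = i₁ by omega]⟩
  · rintro ⟨⟨i₄, i₂⟩, i₃⟩ hq
    simp only [mem_filter, mem_product] at hq ⊢
    obtain ⟨⟨⟨h₄, h₂⟩, h₃⟩, h₁⟩ := hq
    exact ⟨⟨⟨h₁, h₂⟩, h₃, h₄⟩, by ring⟩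
  · rintro ⟨⟨i₁, i₂⟩, i₃, i₄⟩ hi
    simp only [mem_filter, mem_product] at hi
    simp only [Prod.mk.injEq, and_true]
    omega
  · rintro ⟨⟨i₄, i₂⟩, i₃⟩ _
    rfl

lemma norm_sum_quadruple_filter_zpow_le {ζ : 𝕜} (hζ : ‖ζ‖ = 1) {L : ℕ}
    {a₁ b₁ a₂ b₂ a₃ b₃ a₄ b₄ : ℤ} (h₂ : b₂ - a₂ ≤ L) (h₃ : b₃ - a₃ ≤ L) (h₄ : b₄ - a₄ ≤ L)
    (a b c : ℤ) :
    ‖∑ i ∈ (Ico a₁ b₁ ×ˢ Ico a₂ b₂) ×ˢ (Ico a₃ b₃ ×ˢ Ico a₄ b₄) with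
        i.1.1 + i.1.2 = i.2.1 + i.2.2, ζ ^ (a * i.1.2 + b * i.2.1 + c * i.2.2)‖ ≤
      geomBound L (ζ ^ b) * (geomBound L (ζ ^ a) * (geomBound L (ζ ^ c) +
        geomBound L (ζ ^ (c + a))) + geomBound L (ζ ^ (a + b)) *
          (geomBound L (ζ ^ (c - b)) + geomBound L (ζ ^ (c + a)))) := by
  have hζ0 : ζ ≠ 0 := norm_ne_zero_iff.1 (by rw [hζ]; exact one_ne_zero)
  have hζk : ∀ k : ℤ, ‖ζ ^ k‖ = 1 := fun k => by rw [norm_zpow, hζ, one_zpow]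
  have hsplit : ∀ i₂ i₃ i₄ : ℤ,
      ζ ^ (a * i₂ + b * i₃ + c * i₄) = (ζ ^ c) ^ i₄ * (ζ ^ a) ^ i₂ * (ζ ^ b) ^ i₃ := fun _ _ _ => by
    rw [← zpow_mul, ← zpow_mul, ← zpow_mul, ← zpow_add₀ hζ0, ← zpow_add₀ hζ0]
    ring_nf
  simp only [hsplit,
    sum_filter_add_eq_add _ _ _ _ fun i₂ i₃ i₄ => (ζ ^ c) ^ i₄ * (ζ ^ a) ^ i₂ * (ζ ^ b) ^ i₃]
  simpa only [← zpow_add₀ hζ0, ← zpow_sub₀ hζ0] using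
    norm_sum_Ico_product_Ico_product_Ico_filter_le (hζk a) (hζk b) (hζk c) h₂ h₃ h₄ a₁ b₁

theorem Function.Periodic.sum_range_add {M : Type*} [AddCommGroup M] {f : ℤ → M} {n : ℕ}
    (hf : Function.Periodic f n) (d : ℤ) : ∑ c ∈ range n, f (c + d) = ∑ c ∈ range n, f c := by
  have step : ∀ d : ℤ, ∑ c ∈ range n, f (c + (d + 1)) = ∑ c ∈ range n, f (c + d) := fun d => by
    have h := (sum_range_succ' (fun c : ℕ => f (c + d)) n).symm.trans (sum_range_succ _ n)
    rw [Nat.cast_zero, zero_add, add_comm (n : ℤ), hf d] at h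
    simpa only [Nat.cast_add, Nat.cast_one, add_assoc, add_comm (1 : ℤ)] using add_right_cancel h
  induction d using Int.induction_on with
  | zero => simp
  | succ k ih => rw [step, ih]
  | pred k ih => rw [← step, sub_add_cancel, ih]

lemma Function.Periodic.sum_range_triple_eq {g : ℤ → ℝ} {n : ℕ} (hg : Function.Periodic g n) :
    ∑ a ∈ range n, ∑ b ∈ range n, ∑ c ∈ range n,
        g b * (g a * (g c + g (c + a)) + g (a + b) * (g (c - b) + g (c + a))) =
      4 * (∑ k ∈ range n, g k) ^ 3 := by
  set G := ∑ k ∈ range n, g k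
  have hadd : ∀ d : ℤ, ∑ c ∈ range n, g (c + d) = G := hg.sum_range_add
  have hsub : ∀ d : ℤ, ∑ c ∈ range n, g (c - d) = G := fun d => by
    simpa only [sub_eq_add_neg] using hadd (-d)
  have hconv : ∑ a ∈ range n, ∑ b ∈ range n, g b * g (a + b) = G ^ 2 := by
    rw [sum_comm]
    simp only [← mul_sum, hadd, ← sum_mul]
    ring
  calc _ = ∑ a ∈ range n, ∑ b ∈ range n, 2 * G * (g a * g b + g b * g (a + b)) := by
        refine sum_congr rfl fun a _ => sum_congr rfl fun b _ => ?_
        simp only [mul_add, sum_add_distrib, ← mul_sum, hadd, hsub]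
        ring
    _ = 2 * G * (∑ a ∈ range n, ∑ b ∈ range n, g a * g b +
          ∑ a ∈ range n, ∑ b ∈ range n, g b * g (a + b)) := by
        simp only [← mul_sum, sum_add_distrib]
    _ = 4 * G ^ 3 := by
        rw [hconv, ← sum_mul_sum]
        ring

lemma two_mul_mul_one_sub_le_sin_pi_mul {s : ℝ} (h0 : 0 ≤ s) (h1 : s ≤ 1) :
    2 * s * (1 - s) ≤ Real.sin (π * s) := by
  have jordan : ∀ t : ℝ, 0 ≤ t → t ≤ 1 / 2 → 2 * t ≤ Real.sin (π * t) := fun t ht0 ht1 => by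
    have h := mul_le_sin (x := π * t) (by positivity) (by nlinarith [pi_pos])
    rwa [← mul_assoc, div_mul_cancel₀ _ pi_ne_zero] at h
  rcases le_total s (1 / 2) with h | h
  · nlinarith [jordan s h0 h]
  · have h' := jordan (1 - s) (by linarith) (by linarith)
    rw [show π * (1 - s) = π - π * s by ring, Real.sin_pi_sub] at h'
    nlinarith

lemma geomBound_exp_two_pi_I_mul_le {L : ℕ} {s : ℝ} (h0 : 0 < s) (h1 : s < 1) :
    geomBound L (exp (2 * π * I * s)) ≤ (s⁻¹ + (1 - s)⁻¹) / 2 := by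
  have hnorm : 4 * s * (1 - s) ≤ ‖exp (2 * π * I * s) - 1‖ := by
    rw [show 2 * π * I * s = I * ↑(2 * π * s) by push_cast; ring, norm_exp_I_mul_ofReal_sub_one,
      norm_mul, Real.norm_two, Real.norm_eq_abs, show 2 * π * s / 2 = π * s by ring]
    nlinarith [two_mul_mul_one_sub_le_sin_pi_mul h0.le h1.le, le_abs_self (Real.sin (π * s))]
  have hpos : 0 < 4 * s * (1 - s) := by have := sub_pos.2 h1; positivity
  have hne : exp (2 * π * I * s) ≠ 1 := fun h => by
    rw [h, sub_self, norm_zero] at hnorm; linarith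
  calc geomBound L (exp (2 * π * I * s)) ≤ 2 / ‖exp (2 * π * I * s) - 1‖ := geomBound_le_two_div hne
    _ ≤ 2 / (4 * s * (1 - s)) := by gcongr
    _ = (s⁻¹ + (1 - s)⁻¹) / 2 := by
        have : 1 - s ≠ 0 := (sub_pos.2 h1).ne'
        field_simp
        ring

lemma geomBound_exp_zpow_succ_le (L : ℕ) {m k : ℕ} (hk : k < m) :
    geomBound L (exp (2 * π * I / ↑(m + 1)) ^ ((k + 1 : ℕ) : ℤ)) ≤
      (m + 1 : ℝ) / 2 * (((k : ℝ) + 1)⁻¹ + (((m - 1 - k : ℕ) : ℝ) + 1)⁻¹) := by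
  have hk' : ((m - 1 - k : ℕ) : ℝ) + 1 = m - k := by
    rw [Nat.cast_sub (by omega), Nat.cast_sub (by omega)]; ring
  have hs0 : 0 < ((k : ℝ) + 1) / (m + 1) := by positivity
  have hs1 : ((k : ℝ) + 1) / (m + 1) < 1 := by
    rw [div_lt_one (by positivity)]; exact_mod_cast Nat.succ_lt_succ hk
  have h1s : 1 - ((k : ℝ) + 1) / (m + 1) = (m - k) / (m + 1) := by field_simp; ring
  rw [← exp_int_mul, show ((k + 1 : ℕ) : ℤ) * (2 * π * I / ↑(m + 1)) =
    2 * π * I * ↑(((k : ℝ) + 1) / (m + 1)) by push_cast; ring]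
  refine (geomBound_exp_two_pi_I_mul_le hs0 hs1).trans_eq ?_
  rw [hk', h1s, inv_div, inv_div]
  ring

lemma sum_range_geomBound_le (L : ℕ) {n : ℕ} (hn : 0 < n) :
    ∑ k ∈ range n, geomBound L (exp (2 * π * I / n) ^ (k : ℤ)) ≤ L + n * (1 + Real.log n) := by
  obtain ⟨m, rfl⟩ : ∃ m, n = m + 1 := ⟨n - 1, by omega⟩
  set h : ℕ → ℝ := fun j => ((j : ℝ) + 1)⁻¹
  have hharm : ∑ k ∈ range m, h k ≤ 1 + Real.log ↑(m + 1) :=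
    calc ∑ k ∈ range m, h k ≤ ∑ k ∈ range (m + 1), h k :=
          sum_le_sum_of_subset_of_nonneg (range_subset_range.2 m.le_succ) fun _ _ _ => by positivity
      _ = harmonic (m + 1) := by simp [harmonic, h]
      _ ≤ 1 + Real.log ↑(m + 1) := harmonic_le_one_add_log _
  calc ∑ k ∈ range (m + 1), geomBound L (exp (2 * π * I / ↑(m + 1)) ^ (k : ℤ))
      = ∑ k ∈ range m, geomBound L (exp (2 * π * I / ↑(m + 1)) ^ ((k + 1 : ℕ) : ℤ)) + L := by
        rw [sum_range_succ', Nat.cast_zero, zpow_zero, geomBound_one]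
    _ ≤ ∑ k ∈ range m, (m + 1 : ℝ) / 2 * (h k + h (m - 1 - k)) + L := by
        gcongr with k hk
        exact geomBound_exp_zpow_succ_le L (mem_range.1 hk)
    _ = (m + 1 : ℝ) * ∑ k ∈ range m, h k + L := by
        rw [← mul_sum, sum_add_distrib, sum_range_reflect h m]
        ring
    _ ≤ L + ↑(m + 1) * (1 + Real.log ↑(m + 1)) := by
        push_cast at hharm ⊢
        nlinarith

theorem sum_abs_quadruple_interval_sum_le_general (n L : ℕ) (hn : 0 < n)
    (a₁ b₁ a₂ b₂ a₃ b₃ a₄ b₄ : ℤ)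
    (h₂ : b₂ - a₂ ≤ L) (h₃ : b₃ - a₃ ≤ L) (h₄ : b₄ - a₄ ≤ L) :
    ∑ a ∈ Finset.range n, ∑ b ∈ Finset.range n, ∑ c ∈ Finset.range n,
        ‖(∑ i ∈ (((Finset.Ico a₁ b₁ ×ˢ Finset.Ico a₂ b₂) ×ˢ
              (Finset.Ico a₃ b₃ ×ˢ Finset.Ico a₄ b₄)).filter
              (fun i => i.1.1 + i.1.2 = i.2.1 + i.2.2)),
          Complex.exp (2 * Real.pi * Complex.I * (a * i.1.2 + b * i.2.1 + c * i.2.2) / n))‖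
      ≤ 936 * (max n L : ℝ) ^ 3 * (1 + Real.log n) ^ 3 := by
  set ζ : ℂ := exp (2 * π * I / n)
  have hζ : IsPrimitiveRoot ζ n := isPrimitiveRoot_exp n hn.ne'
  have hexp : ∀ (a b c : ℕ) (i₂ i₃ i₄ : ℤ), exp (2 * π * I * (a * i₂ + b * i₃ + c * i₄) / n) =
      ζ ^ ((a : ℤ) * i₂ + b * i₃ + c * i₄) := fun _ _ _ _ _ _ => by
    rw [← exp_int_mul]
    congr 1
    push_cast
    ring
  have hζ0 : ζ ≠ 0 := exp_ne_zero _
  have hg : Function.Periodic (fun k : ℤ => geomBound L (ζ ^ k)) n := fun k => by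
    simp only [zpow_add₀ hζ0, zpow_natCast, hζ.pow_eq_one, mul_one]
  have hG := sum_range_geomBound_le L hn
  have hG0 : 0 ≤ ∑ k ∈ range n, geomBound L (ζ ^ (k : ℤ)) :=
    sum_nonneg fun _ _ => geomBound_nonneg _ _
  have hlog : 0 ≤ Real.log n := Real.log_nonneg (by exact_mod_cast hn)
  have hGM : ∑ k ∈ range n, geomBound L (ζ ^ (k : ℤ)) ≤ 2 * max (n : ℝ) L * (1 + Real.log n) := by
    nlinarith [le_max_left (n : ℝ) L, le_max_right (n : ℝ) L]
  simp only [hexp]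
  refine (sum_le_sum fun (a : ℕ) _ => sum_le_sum fun (b : ℕ) _ => sum_le_sum fun (c : ℕ) _ =>
    norm_sum_quadruple_filter_zpow_le (hζ.norm'_eq_one hn.ne') h₂ h₃ h₄ a b c).trans ?_
  rw [hg.sum_range_triple_eq]
  calc _ ≤ 4 * (2 * max (n : ℝ) L * (1 + Real.log n)) ^ 3 := by gcongr
    _ ≤ 936 * (max n L : ℝ) ^ 3 * (1 + Real.log n) ^ 3 := by
        have : 0 ≤ max (n : ℝ) L ^ 3 * (1 + Real.log n) ^ 3 := by positivity
        nlinarith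

theorem sum_abs_quadruple_interval_sum_le (n L : ℕ) (hn : 0 < n) (hL : 0 < L)
    (a₁ b₁ a₂ b₂ a₃ b₃ a₄ b₄ : ℤ)
    (h₁ : b₁ - a₁ ≤ L) (h₂ : b₂ - a₂ ≤ L) (h₃ : b₃ - a₃ ≤ L) (h₄ : b₄ - a₄ ≤ L) :
    ∑ a ∈ Finset.range n, ∑ b ∈ Finset.range n, ∑ c ∈ Finset.range n,
        ‖(∑ i ∈ (((Finset.Ico a₁ b₁ ×ˢ Finset.Ico a₂ b₂) ×ˢ
              (Finset.Ico a₃ b₃ ×ˢ Finset.Ico a₄ b₄)).filter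
              (fun i => i.1.1 + i.1.2 = i.2.1 + i.2.2)),
          Complex.exp (2 * Real.pi * Complex.I * (a * i.1.2 + b * i.2.1 + c * i.2.2) / n))‖
      ≤ 936 * (max n L : ℝ) ^ 3 * (1 + Real.log n) ^ 3 :=
  sum_abs_quadruple_interval_sum_le_general n L hn a₁ b₁ a₂ b₂ a₃ b₃ a₄ b₄ h₂ h₃ h₄
end

section
/- Let q = 2^d, n = q - 1, ψ the canonical additive character of F_q (ψ(y) = (−1)^{Tr(y)}), θ a primitive element of F_q, and χ the multiplicative character of order n with χ(θ^j) = e^{2πij/n}. Define the Gauss sums Y(k) = ∑_{x∈F_q^*} ψ(x) χ^k(x) and set L(a,b,c) = (1/n^3) ∑_{k∈ℤ/nℤ} Y(k) Y(k+a) conj(Y(k+b)) conj(Y(k+c)). Then L(a,b,c) = δ_b δ_{a−c} + (1/n^2) Y(a−c) Y(−b) ∑_{v∈F_q^*, v≠1} χ(v^{−c}(v+1)^{b+c−a}), where δ_0 = 1 and δ_u = 0 for u ≠ 0. -/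
/-!
Pair `Y(k)` with `conj Y(k + b)` and `Y(k + a)` with `conj Y(k + c)`. Since the characteristic is
2, `ψ` is real, and the substitution `y = s w` turns each pair into a multiplicative Fourier series
`∑ₛ χ(s)ᵏ Y_{1+s}(·)`, where `Y_{1+s}` is the Gauss sum of the shifted character
`x ↦ ψ((1 + s) x)`. Summing over `k`, orthogonality of the powers of the faithful character `χ`
collapses the product of the two series to a single sum over `t`. A shifted Gauss sum equals
`χ(1 + t)⁻ᵐ Y(m)` unless `1 + t = 0`, i.e. `t = 1`: that term is `n² δ_b δ_{a-c}`, and the other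
terms combine, through `1 + t⁻¹ = (t + 1) / t`, into the character sum.
-/

open Complex Real Finset ComplexConjugate

section ZModPow

variable {n : ℕ} [NeZero n]

theorem pow_zmod_val_add {M : Type*} [Monoid M] {z : M} (hz : z ^ n = 1) (a b : ZMod n) :
    z ^ (a + b).val = z ^ a.val * z ^ b.val := by
  rw [ZMod.val_add, ← pow_eq_pow_mod _ hz, pow_add]

theorem pow_zmod_val_neg {M : Type*} [DivisionMonoid M] {z : M} (hz : z ^ n = 1) (a : ZMod n) :
    z ^ (-a).val = (z ^ a.val)⁻¹ :=
  eq_inv_of_mul_eq_one_left <| by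
    rw [← pow_zmod_val_add hz, neg_add_cancel, ZMod.val_zero, pow_zero]

theorem sum_zmod_pow_val {K : Type*} [Field K] [DecidableEq K] {z : K} (hz : z ^ n = 1) :
    ∑ k : ZMod n, z ^ k.val = if z = 1 then (n : K) else 0 := by
  split_ifs with h
  · simp [h]
  · have hshift : z * ∑ k : ZMod n, z ^ k.val = ∑ k : ZMod n, z ^ k.val := by
      rw [mul_sum]
      refine Fintype.sum_equiv (Equiv.addRight 1) _ _ fun k => ?_
      rw [Equiv.coe_addRight, pow_zmod_val_add hz, ZMod.val_one_eq_one_mod, ← pow_eq_pow_mod _ hz,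
        pow_one, mul_comm]
    by_contra hS
    exact h ((mul_eq_right₀ hS).1 hshift)

end ZModPow

theorem sum_filter_ne_zero_comp_mul_left {G₀ M : Type*} [GroupWithZero G₀] [Fintype G₀]
    [DecidableEq G₀] [AddCommMonoid M] (f : G₀ → M) {a : G₀} (ha : a ≠ 0) :
    ∑ x ∈ univ.filter (· ≠ 0), f (a * x) = ∑ x ∈ univ.filter (· ≠ 0), f x :=
  sum_equiv (Equiv.mulLeft₀ a ha) (by simp [ha]) (fun _ _ => rfl)

theorem exists_monoidWithZeroHom_coe_eq {M₀ N₀ : Type*} [MonoidWithZero M₀] [MonoidWithZero N₀]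
    {θ : M₀} (hθ : ∀ x : M₀, x ≠ 0 → ∃ j : ℕ, x = θ ^ j) {f : M₀ → N₀} (hf0 : f 0 = 0) {ζ : N₀}
    (hf : ∀ j : ℕ, f (θ ^ j) = ζ ^ j) : ∃ χ : M₀ →*₀ N₀, ⇑χ = f := by
  refine ⟨{ toFun := f
            map_zero' := hf0
            map_one' := by simpa using hf 0
            map_mul' := fun x y => ?_ }, rfl⟩
  rcases eq_or_ne x 0 with rfl | hx
  · simp [hf0]
  rcases eq_or_ne y 0 with rfl | hy
  · simp [hf0]
  obtain ⟨i, rfl⟩ := hθ x hx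
  obtain ⟨j, rfl⟩ := hθ y hy
  simp only [← pow_add, hf]

theorem sum_filter_ne_zero_eq_add_sum_filter_ne_one {M₀ M : Type*} [MulZeroOneClass M₀]
    [Nontrivial M₀] [Fintype M₀] [DecidableEq M₀] [AddCommMonoid M] (f : M₀ → M) :
    ∑ x ∈ univ.filter (· ≠ 0), f x = f 1 + ∑ x ∈ univ.filter (fun x => x ≠ 0 ∧ x ≠ 1), f x := by
  rw [← add_sum_erase _ _ (by simp : (1 : M₀) ∈ univ.filter (· ≠ 0))]
  congr 2
  ext x
  simp [and_comm]

section Character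

variable {F : Type*} [Field F] [Fintype F] {n : ℕ}

theorem pow_eq_one_of_card_eq (hcard : Fintype.card F = n + 1) {x : F} (hx : x ≠ 0) :
    x ^ n = 1 := by
  rw [show n = Fintype.card F - 1 by omega, FiniteField.pow_card_sub_one_eq_one x hx]

variable (χ : F →*₀ ℂ)

theorem apply_pow_eq_one (hcard : Fintype.card F = n + 1) {x : F} (hx : x ≠ 0) :
    χ x ^ n = 1 := by
  rw [← map_pow, pow_eq_one_of_card_eq hcard hx, map_one]

variable [NeZero n]

theorem eq_one_of_apply_eq_one (hcard : Fintype.card F = n + 1) {θ : F}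
    (hθ : ∀ x : F, x ≠ 0 → ∃ j : ℕ, x = θ ^ j) (hζ : IsPrimitiveRoot (χ θ) n) {x : F}
    (hx : χ x = 1) : x = 1 := by
  rcases eq_or_ne x 0 with rfl | hx0
  · simp at hx
  obtain ⟨j, rfl⟩ := hθ x hx0
  rw [map_pow] at hx
  obtain ⟨m, rfl⟩ := (hζ.pow_eq_one_iff_dvd j).1 hx
  rw [pow_mul, pow_eq_one_of_card_eq hcard (ne_zero_of_map (hζ.ne_zero (NeZero.ne n))), one_pow]

variable [DecidableEq F]

theorem sum_zmod_apply_pow_val (hcard : Fintype.card F = n + 1) {θ : F}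
    (hθ : ∀ x : F, x ≠ 0 → ∃ j : ℕ, x = θ ^ j) (hζ : IsPrimitiveRoot (χ θ) n) {x : F}
    (hx : x ≠ 0) : ∑ k : ZMod n, χ x ^ k.val = if x = 1 then (n : ℂ) else 0 := by
  rw [sum_zmod_pow_val (apply_pow_eq_one χ hcard hx)]
  exact if_congr ⟨eq_one_of_apply_eq_one χ hcard hθ hζ, fun h => h ▸ map_one χ⟩ rfl rfl

theorem sum_filter_ne_zero_apply_pow_val (hcard : Fintype.card F = n + 1) {θ : F}
    (hζ : IsPrimitiveRoot (χ θ) n) (m : ZMod n) :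
    ∑ x ∈ univ.filter (· ≠ 0), χ x ^ m.val = if m = 0 then (n : ℂ) else 0 := by
  split_ifs with hm
  · rw [hm, ZMod.val_zero]
    simp [filter_ne', hcard]
  · have hθm : χ θ ^ m.val ≠ 1 := fun h =>
      hm <| (ZMod.val_eq_zero m).1 <| Nat.eq_zero_of_dvd_of_lt
        ((hζ.pow_eq_one_iff_dvd _).1 h) (ZMod.val_lt m)
    have hshift : χ θ ^ m.val * ∑ x ∈ univ.filter (· ≠ 0), χ x ^ m.val =
        ∑ x ∈ univ.filter (· ≠ 0), χ x ^ m.val := by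
      simpa only [map_mul, mul_pow, mul_sum] using
        sum_filter_ne_zero_comp_mul_left (fun x => χ x ^ m.val)
          (ne_zero_of_map (hζ.ne_zero (NeZero.ne n)))
    by_contra hS
    exact hθm ((mul_eq_right₀ hS).1 hshift)

theorem sum_zmod_mul_sum_apply_pow_val (hcard : Fintype.card F = n + 1) {θ : F}
    (hθ : ∀ x : F, x ≠ 0 → ∃ j : ℕ, x = θ ^ j) (hζ : IsPrimitiveRoot (χ θ) n) (f g : F → ℂ) :
    ∑ k : ZMod n, (∑ t ∈ univ.filter (· ≠ 0), χ t ^ k.val * f t) *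
        (∑ s ∈ univ.filter (· ≠ 0), χ s ^ k.val * g s) =
      n * ∑ t ∈ univ.filter (· ≠ 0), f t * g t⁻¹ := by
  calc _ = ∑ t ∈ univ.filter (· ≠ 0), ∑ s ∈ univ.filter (· ≠ 0),
          ∑ k : ZMod n, χ t ^ k.val * f t * (χ s ^ k.val * g s) := by
        simp only [sum_mul_sum]
        rw [sum_comm]
        exact sum_congr rfl fun t _ => sum_comm
    _ = ∑ t ∈ univ.filter (· ≠ 0), ∑ s ∈ univ.filter (· ≠ 0),
          f t * g s * ∑ k : ZMod n, χ (t * s) ^ k.val := by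
        simp only [map_mul, mul_pow, mul_sum]
        exact sum_congr rfl fun t _ => sum_congr rfl fun s _ => sum_congr rfl fun k _ => by ring
    _ = ∑ t ∈ univ.filter (· ≠ 0), ∑ s ∈ univ.filter (· ≠ 0),
          if t⁻¹ = s then f t * g s * n else 0 := by
        refine sum_congr rfl fun t ht => sum_congr rfl fun s hs => ?_
        have hts : t * s ≠ 0 := mul_ne_zero (mem_filter.1 ht).2 (mem_filter.1 hs).2
        rw [sum_zmod_apply_pow_val χ hcard hθ hζ hts, mul_ite, mul_zero]
        exact if_congr (mul_eq_one_iff_inv_eq₀ (mem_filter.1 ht).2) rfl rfl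
    _ = _ := by
        simp only [sum_ite_eq, mul_sum]
        refine sum_congr rfl fun t ht => ?_
        rw [if_pos (by simpa using (mem_filter.1 ht).2)]
        ring

end Character

section GaussSum

variable {F : Type*} [Field F] [Fintype F] [DecidableEq F] {n : ℕ}

noncomputable def powGaussSum (ψ : AddChar F ℂ) (χ : F →*₀ ℂ) (k : ZMod n) : ℂ :=
  ∑ x ∈ univ.filter (· ≠ 0), ψ x * χ x ^ k.val

variable (ψ : AddChar F ℂ) (χ : F →*₀ ℂ)

theorem powGaussSum_mulShift {a : F} (ha : a ≠ 0) (m : ZMod n) :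
    powGaussSum (ψ.mulShift a) χ m = (χ a ^ m.val)⁻¹ * powGaussSum ψ χ m := by
  rw [powGaussSum, powGaussSum, mul_sum,
    ← sum_filter_ne_zero_comp_mul_left (fun x => ψ.mulShift a x * χ x ^ m.val) (inv_ne_zero ha)]
  refine sum_congr rfl fun x _ => ?_
  rw [AddChar.mulShift_apply, mul_inv_cancel_left₀ ha, map_mul, map_inv₀, mul_pow, inv_pow]
  ring

variable [NeZero n]

theorem powGaussSum_mulShift_zero (hcard : Fintype.card F = n + 1) {θ : F}
    (hζ : IsPrimitiveRoot (χ θ) n) (m : ZMod n) :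
    powGaussSum (ψ.mulShift 0) χ m = if m = 0 then (n : ℂ) else 0 := by
  simp only [powGaussSum, AddChar.mulShift_zero, AddChar.one_apply, one_mul]
  exact sum_filter_ne_zero_apply_pow_val χ hcard hζ m

variable [CharP F 2]

theorem star_powGaussSum (hcard : Fintype.card F = n + 1) (m : ZMod n) :
    conj (powGaussSum ψ χ m) = powGaussSum ψ χ (-m) := by
  rw [powGaussSum, map_sum]
  refine sum_congr rfl fun x hx => ?_
  have hχx := apply_pow_eq_one χ hcard (mem_filter.1 hx).2
  rw [map_mul, ← AddChar.map_neg_eq_conj, CharTwo.neg_eq, map_pow,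
    ← Complex.inv_eq_conj (norm_eq_one_of_pow_eq_one hχx (NeZero.ne n)), inv_pow,
    pow_zmod_val_neg hχx]

theorem powGaussSum_mul_star (hcard : Fintype.card F = n + 1) (m r : ZMod n) :
    powGaussSum ψ χ m * conj (powGaussSum ψ χ r) =
      ∑ s ∈ univ.filter (· ≠ 0), χ s ^ m.val * powGaussSum (ψ.mulShift (1 + s)) χ (m - r) := by
  calc powGaussSum ψ χ m * conj (powGaussSum ψ χ r)
      = ∑ w ∈ univ.filter (· ≠ 0), ∑ y ∈ univ.filter (· ≠ 0),
          ψ y * χ y ^ m.val * (ψ w * χ w ^ (-r).val) := by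
        rw [star_powGaussSum ψ χ hcard, powGaussSum, powGaussSum, sum_mul_sum, sum_comm]
    _ = ∑ w ∈ univ.filter (· ≠ 0), ∑ s ∈ univ.filter (· ≠ 0),
          χ s ^ m.val * (ψ ((1 + s) * w) * χ w ^ (m - r).val) := by
        refine sum_congr rfl fun w hw => ?_
        rw [← sum_filter_ne_zero_comp_mul_left _ (mem_filter.1 hw).2]
        refine sum_congr rfl fun s _ => ?_
        rw [sub_eq_add_neg, pow_zmod_val_add (apply_pow_eq_one χ hcard (mem_filter.1 hw).2),
          map_mul χ, mul_pow, add_mul, one_mul, AddChar.map_add_eq_mul, mul_comm s w]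
        ring
    _ = _ := by
        rw [sum_comm]
        simp only [powGaussSum, AddChar.mulShift_apply, mul_sum]

theorem powGaussSum_mulShift_one_add_mul_mulShift_one_add_inv (hcard : Fintype.card F = n + 1)
    {t : F} (ht0 : t ≠ 0) (ht1 : t ≠ 1) (a b c : ZMod n) :
    powGaussSum (ψ.mulShift (1 + t)) χ (-b) *
        (χ t⁻¹ ^ a.val * powGaussSum (ψ.mulShift (1 + t⁻¹)) χ (a - c)) =
      powGaussSum ψ χ (a - c) * powGaussSum ψ χ (-b) *
        χ (t ^ (-c).val * (t + 1) ^ (b + c - a).val) := by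
  have one_add_ne_zero : ∀ u : F, u ≠ 1 → 1 + u ≠ 0 := fun u hu h =>
    hu (by rw [eq_neg_of_add_eq_zero_right h, CharTwo.neg_eq])
  have hA := apply_pow_eq_one χ hcard ht0
  have hB := apply_pow_eq_one χ hcard (add_comm 1 t ▸ one_add_ne_zero t ht1)
  have h1 : 1 + t⁻¹ = (t + 1) / t := by field_simp
  rw [powGaussSum_mulShift ψ χ (one_add_ne_zero t ht1),
    powGaussSum_mulShift ψ χ (one_add_ne_zero t⁻¹ (inv_ne_one.2 ht1)), h1, add_comm 1 t,
    map_div₀, map_inv₀, map_mul, map_pow, map_pow, show -c = (a - c) + -a by ring,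
    show b + c - a = -(-b + (a - c)) by ring, pow_zmod_val_add hA, pow_zmod_val_neg hA,
    pow_zmod_val_neg hB (-b + (a - c)), pow_zmod_val_add hB, inv_pow, div_pow]
  have hA0 : χ t ≠ 0 := fun h => by simp [h, NeZero.ne n] at hA
  have hB0 : χ (t + 1) ≠ 0 := fun h => by simp [h, NeZero.ne n] at hB
  field_simp

theorem sum_powGaussSum_mul_mul_star_mul_star (hcard : Fintype.card F = n + 1) {θ : F}
    (hθ : ∀ x : F, x ≠ 0 → ∃ j : ℕ, x = θ ^ j) (hζ : IsPrimitiveRoot (χ θ) n) (a b c : ZMod n) :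
    ∑ k : ZMod n, powGaussSum ψ χ k * powGaussSum ψ χ (k + a) *
        conj (powGaussSum ψ χ (k + b)) * conj (powGaussSum ψ χ (k + c)) =
      n ^ 3 * ((if b = 0 then 1 else 0) * (if a - c = 0 then 1 else 0)) +
        n * (powGaussSum ψ χ (a - c) * powGaussSum ψ χ (-b) *
          ∑ v ∈ univ.filter (fun v : F => v ≠ 0 ∧ v ≠ 1),
            χ (v ^ (-c).val * (v + 1) ^ (b + c - a).val)) := by
  set C : ZMod n → F → ℂ := fun m t => powGaussSum (ψ.mulShift (1 + t)) χ m with hC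
  calc _ = ∑ k : ZMod n, (∑ t ∈ univ.filter (· ≠ 0), χ t ^ k.val * C (-b) t) *
          (∑ s ∈ univ.filter (· ≠ 0), χ s ^ k.val * (χ s ^ a.val * C (a - c) s)) := by
        refine sum_congr rfl fun k _ => ?_
        rw [mul_assoc, mul_mul_mul_comm, powGaussSum_mul_star ψ χ hcard,
          powGaussSum_mul_star ψ χ hcard, show k - (k + b) = -b by ring,
          show k + a - (k + c) = a - c by ring]
        refine congrArg _ (sum_congr rfl fun s hs => ?_)
        rw [pow_zmod_val_add (apply_pow_eq_one χ hcard (mem_filter.1 hs).2), mul_assoc]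
    _ = n * ∑ t ∈ univ.filter (· ≠ 0), C (-b) t * (χ t⁻¹ ^ a.val * C (a - c) t⁻¹) :=
        sum_zmod_mul_sum_apply_pow_val χ hcard hθ hζ _ _
    _ = _ := by
        rw [sum_filter_ne_zero_eq_add_sum_filter_ne_one, mul_add]
        congr 1
        · simp only [hC, inv_one, map_one, one_pow, one_mul, CharTwo.add_self_eq_zero,
            powGaussSum_mulShift_zero ψ χ hcard hζ, neg_eq_zero]
          split_ifs <;> ring
        · congr 1
          rw [mul_sum]
          refine sum_congr rfl fun t ht => ?_
          have ht' := (mem_filter.1 ht).2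
          rw [powGaussSum_mulShift_one_add_mul_mulShift_one_add_inv ψ χ hcard ht'.1 ht'.2]

end GaussSum

theorem gauss_sum_L_identity_general (d : ℕ) (n : ℕ) (hn : n = 2 ^ d - 1)
    [NeZero n]
    (F : Type) [Field F] [Fintype F] [DecidableEq F] [Algebra (ZMod 2) F]
    (hF : Fintype.card F = 2 ^ d)
    (ψ : F → ℂ)
    (hψ : ∀ y : F, ψ y = (-1 : ℂ) ^ ((Algebra.trace (ZMod 2) F y).val))
    (θ : F) (hθ : ∀ x : F, x ≠ 0 → ∃ j : ℕ, x = θ ^ j)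
    (χ : F → ℂ) (hχ0 : χ 0 = 0)
    (hχ : ∀ j : ℕ, χ (θ ^ j) = Complex.exp (2 * Real.pi * Complex.I * j / n))
    (Y : ZMod n → ℂ)
    (hY : ∀ k : ZMod n, Y k = ∑ x ∈ Finset.univ.filter (fun x : F => x ≠ 0),
        ψ x * (χ x) ^ k.val)
    (L : ZMod n → ZMod n → ZMod n → ℂ)
    (hL : ∀ a b c : ZMod n, L a b c = (1 / (n : ℂ) ^ 3) *
        ∑ k : ZMod n, Y k * Y (k + a) * (starRingEnd ℂ) (Y (k + b)) *
          (starRingEnd ℂ) (Y (k + c))) :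
    ∀ a b c : ZMod n,
      L a b c = (if b = 0 then 1 else 0) * (if a - c = 0 then 1 else 0) +
        (1 / (n : ℂ) ^ 2) * Y (a - c) * Y (-b) *
          ∑ v ∈ Finset.univ.filter (fun v : F => v ≠ 0 ∧ v ≠ 1),
            χ (v ^ (-c : ZMod n).val * (v + 1) ^ (b + c - a : ZMod n).val) := by
  have : CharP F 2 := charP_of_injective_algebraMap (algebraMap (ZMod 2) F).injective 2
  have hcard : Fintype.card F = n + 1 := by
    have := Nat.one_le_two_pow (n := d)
    omega
  have hχζ : ∀ j : ℕ, χ (θ ^ j) = exp (2 * π * I / n) ^ j := fun j => by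
    rw [hχ, ← Complex.exp_nat_mul]
    ring_nf
  obtain ⟨χ, rfl⟩ := exists_monoidWithZeroHom_coe_eq hθ hχ0 hχζ
  have hζ : IsPrimitiveRoot (χ θ) n := by
    rw [← pow_one θ, hχζ 1, pow_one]
    exact isPrimitiveRoot_exp n (NeZero.ne n)
  obtain ⟨ψ, rfl⟩ : ∃ ψ' : AddChar F ℂ, ⇑ψ' = ψ :=
    ⟨{ toFun := ψ
       map_zero_eq_one' := by simp [hψ]
       map_add_eq_mul' := fun x y => by
         simp only [hψ, map_add, pow_zmod_val_add (by norm_num : (-1 : ℂ) ^ 2 = 1)] }, rfl⟩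
  obtain rfl : Y = powGaussSum ψ χ := funext hY
  intro a b c
  rw [hL, sum_powGaussSum_mul_mul_star_mul_star ψ χ hcard hθ hζ]
  have hn0 : (n : ℂ) ≠ 0 := Nat.cast_ne_zero.2 (NeZero.ne n)
  field_simp

theorem gauss_sum_L_identity (d : ℕ) (hd : 0 < d) (n : ℕ) (hn : n = 2 ^ d - 1)
    [NeZero n]
    (F : Type) [Field F] [Fintype F] [DecidableEq F] [Algebra (ZMod 2) F]
    (hF : Fintype.card F = 2 ^ d)
    (ψ : F → ℂ)
    (hψ : ∀ y : F, ψ y = (-1 : ℂ) ^ ((Algebra.trace (ZMod 2) F y).val))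
    (θ : F) (hθ : ∀ x : F, x ≠ 0 → ∃ j : ℕ, x = θ ^ j)
    (χ : F → ℂ) (hχ0 : χ 0 = 0)
    (hχ : ∀ j : ℕ, χ (θ ^ j) = Complex.exp (2 * Real.pi * Complex.I * j / n))
    (Y : ZMod n → ℂ)
    (hY : ∀ k : ZMod n, Y k = ∑ x ∈ Finset.univ.filter (fun x : F => x ≠ 0),
        ψ x * (χ x) ^ k.val)
    (L : ZMod n → ZMod n → ZMod n → ℂ)
    (hL : ∀ a b c : ZMod n, L a b c = (1 / (n : ℂ) ^ 3) *
        ∑ k : ZMod n, Y k * Y (k + a) * (starRingEnd ℂ) (Y (k + b)) *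
          (starRingEnd ℂ) (Y (k + c))) :
    ∀ a b c : ZMod n,
      L a b c = (if b = 0 then 1 else 0) * (if a - c = 0 then 1 else 0) +
        (1 / (n : ℂ) ^ 2) * Y (a - c) * Y (-b) *
          ∑ v ∈ Finset.univ.filter (fun v : F => v ≠ 0 ∧ v ≠ 1),
            χ (v ^ (-c : ZMod n).val * (v + 1) ^ (b + c - a : ZMod n).val) :=
  gauss_sum_L_identity_general d n hn F hF ψ hψ θ hθ χ hχ0 hχ Y hY L hL
end

section
/- Let a, b, c be odd positive integers. The lattice Λ = {(x,y,z) ∈ ℤ^3 : x ≡ y (mod a), x ≡ z (mod b), y ≡ −z (mod c)} is generated by the vectors ((c+a)/2, (c−a)/2, (c+a)/2), ((c+b)/2, (c+b)/2, (c−b)/2), and (c, c, c), and its fundamental parallelepiped has volume abc. -/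
/-! If `x - y = m a`, `x - z = n b` and `y + z = l c`, then `m a + n b + l c = 2x`; as `a`, `b`, `c`
are odd, `m + n + l` is even, and `(x, y, z) = m g₁ + n g₂ + ((l - m - n) / 2) g₃` for the three
generators. Writing the generators as `(p, q, p)`, `(r, r, s)`, `(c, c, c)` with `p - q = a`,
`r - s = b` and `p + q = r + s = c` removes the halving, and the determinant is `(p - q)(r - s)c`. -/

def congruenceLattice (a b c : ℤ) : AddSubgroup (ℤ × ℤ × ℤ) where
  carrier := {v | a ∣ v.1 - v.2.1 ∧ b ∣ v.1 - v.2.2 ∧ c ∣ v.2.1 + v.2.2}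
  zero_mem' := by simp
  add_mem' := fun ⟨hv₁, hv₂, hv₃⟩ ⟨hw₁, hw₂, hw₃⟩ =>
    ⟨by simpa [add_sub_add_comm] using dvd_add hv₁ hw₁,
      by simpa [add_sub_add_comm] using dvd_add hv₂ hw₂,
      by simpa [add_add_add_comm] using dvd_add hv₃ hw₃⟩
  neg_mem' := by
    simp only [Set.mem_ofPred_eq, Prod.fst_neg, Prod.snd_neg, ← neg_sub', ← neg_add, dvd_neg,
      imp_self, implies_true]

theorem Int.even_add_add_of_even_mul_add_mul_add_mul {a b c m n l : ℤ}
    (ha : Odd a) (hb : Odd b) (hc : Odd c) (h : Even (a * m + b * n + c * l)) :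
    Even (m + n + l) := by
  rw [← Int.not_even_iff_odd] at ha hb hc
  simpa [Int.even_add, Int.even_mul, ha, hb, hc] using h

section

variable {a b c p q r s : ℤ}

theorem closure_le_congruenceLattice (ha : p - q = a) (hb : r - s = b) (hp : p + q = c)
    (hr : r + s = c) :
    AddSubgroup.closure {(p, q, p), (r, r, s), (c, c, c)} ≤ congruenceLattice a b c := by
  rw [AddSubgroup.closure_le]
  rintro v (rfl | rfl | rfl)
  · simp [congruenceLattice, ha, add_comm q, hp]
  · simp [congruenceLattice, hb, hr]
  · simp [congruenceLattice, ← two_mul]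

theorem congruenceLattice_le_closure (ha : p - q = a) (hb : r - s = b) (hp : p + q = c)
    (hr : r + s = c) (hc : Odd c) :
    congruenceLattice a b c ≤ AddSubgroup.closure {(p, q, p), (r, r, s), (c, c, c)} := by
  rintro ⟨x, y, z⟩ ⟨⟨m, hm⟩, ⟨n, hn⟩, ⟨l, hl⟩⟩
  have hodd_a : Odd a := by
    rw [← ha, show p - q = p + q - 2 * q by ring, hp]; exact hc.sub_even (even_two_mul q)
  have hodd_b : Odd b := by
    rw [← hb, show r - s = r + s - 2 * s by ring, hr]; exact hc.sub_even (even_two_mul s)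
  dsimp only at hm hn hl
  obtain ⟨k, hk⟩ : Even (m + n + l) :=
    Int.even_add_add_of_even_mul_add_mul_add_mul hodd_a hodd_b hc ⟨x, by linarith⟩
  have hxyz : ((x, y, z) : ℤ × ℤ × ℤ)
      = m • (p, q, p) + n • (r, r, s) + (k - m - n) • (c, c, c) := by
    obtain rfl : l = k + k - m - n := by omega
    obtain rfl : r = c - s := by omega
    subst ha hb hp
    simp only [Prod.smul_mk, Prod.mk_add_mk, smul_eq_mul, Prod.mk.injEq]
    refine ⟨?_, ?_, ?_⟩ <;> linarith
  rw [hxyz]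
  refine add_mem (add_mem ?_ ?_) ?_ <;>
    exact AddSubgroup.zsmul_mem _ (AddSubgroup.subset_closure (by simp)) _

theorem congruenceLattice_eq_closure (ha : p - q = a) (hb : r - s = b) (hp : p + q = c)
    (hr : r + s = c) (hc : Odd c) :
    congruenceLattice a b c = AddSubgroup.closure {(p, q, p), (r, r, s), (c, c, c)} :=
  le_antisymm (congruenceLattice_le_closure ha hb hp hr hc)
    (closure_le_congruenceLattice ha hb hp hr)

end

theorem det_congruenceLattice_generators {R : Type*} [CommRing R] (p q r s c : R) :
    !![p, q, p; r, r, s; c, c, c].det = (p - q) * (r - s) * c := by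
  rw [Matrix.det_fin_three]
  simp only [Matrix.of_apply, Matrix.cons_val', Matrix.cons_val_zero, Matrix.cons_val_fin_one,
    Matrix.cons_val_one, Matrix.cons_val]
  ring

theorem Int.ediv_two_sub_ediv_two_of_even {a c : ℤ} (h : Even (c + a)) :
    (c + a) / 2 - (c - a) / 2 = a := by
  obtain ⟨k, hk⟩ := h
  omega

theorem Int.ediv_two_add_ediv_two_of_even {a c : ℤ} (h : Even (c + a)) :
    (c + a) / 2 + (c - a) / 2 = c := by
  obtain ⟨k, hk⟩ := h
  omega

theorem lattice_odd_generators_and_volume (a b c : ℤ)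
    (ha : 0 < a) (hb : 0 < b) (hc : 0 < c)
    (hoa : Odd a) (hob : Odd b) (hoc : Odd c) :
    ({p : ℤ × ℤ × ℤ | a ∣ (p.1 - p.2.1) ∧ b ∣ (p.1 - p.2.2) ∧ c ∣ (p.2.1 + p.2.2)}
        = (AddSubgroup.closure
            ({((c + a) / 2, (c - a) / 2, (c + a) / 2),
              ((c + b) / 2, (c + b) / 2, (c - b) / 2),
              (c, c, c)} : Set (ℤ × ℤ × ℤ)) : Set (ℤ × ℤ × ℤ))) ∧
      |(Matrix.det !![(c + a) / 2, (c - a) / 2, (c + a) / 2;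
                      (c + b) / 2, (c + b) / 2, (c - b) / 2;
                      c, c, c])| = a * b * c := by
  have hca : Even (c + a) := hoc.add_odd hoa
  have hcb : Even (c + b) := hoc.add_odd hob
  refine ⟨congrArg SetLike.coe (congruenceLattice_eq_closure
    (Int.ediv_two_sub_ediv_two_of_even hca) (Int.ediv_two_sub_ediv_two_of_even hcb)
    (Int.ediv_two_add_ediv_two_of_even hca) (Int.ediv_two_add_ediv_two_of_even hcb) hoc), ?_⟩
  rw [det_congruenceLattice_generators, Int.ediv_two_sub_ediv_two_of_even hca,
    Int.ediv_two_sub_ediv_two_of_even hcb, abs_of_pos (by positivity)]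
end

section
/- Let n ≡ 1 (mod 4) be a positive odd square-free integer all of whose prime divisors are ≡ 1 (mod 4), and let x_j = (j | n/gcd(j,n)) be the Jacobi sequence of length n extended n-periodically. Define the negaperiodic sequence u_j = (−1)^{j(j−1)/2} x_j for j ∈ ℤ (4n-periodic). Then for every nonnegative integer s, the binary sequence (u_{n−s}, u_{n−s+1}, ..., u_{n+s}) of length 2s+1 is skew-symmetric, i.e., writing a_k = u_{n−s+k} for 0 ≤ k ≤ 2s, we have a_{s+j} = (−1)^j a_{s−j} for all 1 ≤ j ≤ s. -/
/-!
Write `u j = σ j * x j` with `σ j = (-1) ^ (j (j - 1) / 2)`. The Jacobi sequence is even and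
`n`-periodic: periodicity because `gcd (n + j, n) = gcd (j, n)` and the Jacobi symbol only sees
`j` modulo the divisor `m = n / gcd (j, n)` of `n`; evenness because `(-1 | m) = χ₄ m = 1`, as
`m` is a product of primes `≡ 1 (mod 4)`. Hence `x (n + j) = x (n - j)`. The exponents of
`σ (n + j)` and `σ (n - j)` differ by `2 n j - j ≡ j (mod 2)`, so `u (n + j) = (-1) ^ j u (n - j)`,
which is the skew-symmetry of every window centred at `n`.
-/

theorem Nat.mod_four_eq_one_of_forall_prime_dvd {m : ℕ}
    (h : ∀ p : ℕ, p.Prime → p ∣ m → p % 4 = 1) : m % 4 = 1 := by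
  induction m using Nat.recOnMul with
  | zero => exact absurd (h 2 Nat.prime_two (dvd_zero 2)) (by norm_num)
  | one => rfl
  | prime p hp => exact h p hp dvd_rfl
  | mul a b iha ihb =>
    rw [Nat.mul_mod, iha fun p hp hpa => h p hp (hpa.mul_right b),
      ihb fun p hp hpb => h p hp (hpb.mul_left a)]

def jacobiSeq (n : ℕ) (j : ℤ) : ℤ := jacobiSym j (n / Int.gcd j n)

theorem div_gcd_dvd (n : ℕ) (j : ℤ) : n / Int.gcd j n ∣ n :=
  Nat.div_dvd_of_dvd (Nat.gcd_dvd_right _ _)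

theorem jacobiSeq_natCast_add (n : ℕ) (j : ℤ) : jacobiSeq n (n + j) = jacobiSeq n j := by
  unfold jacobiSeq
  rw [Int.gcd_self_add_left]
  apply jacobiSym.mod_left'
  have hdvd : ((n / Int.gcd j n : ℕ) : ℤ) ∣ n := Int.natCast_dvd_natCast.mpr (div_gcd_dvd n j)
  rw [Int.add_emod, Int.emod_eq_zero_of_dvd hdvd, zero_add, Int.emod_emod]

theorem jacobiSeq_neg {n : ℕ} (hn : ∀ p : ℕ, p.Prime → p ∣ n → p % 4 = 1) (j : ℤ) :
    jacobiSeq n (-j) = jacobiSeq n j := by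
  unfold jacobiSeq
  rw [Int.neg_gcd]
  have hm : n / Int.gcd j n % 4 = 1 := Nat.mod_four_eq_one_of_forall_prime_dvd
    fun p hp hpm => hn p hp (hpm.trans (div_gcd_dvd n j))
  rw [jacobiSym.neg j (Nat.odd_iff.mpr (Nat.odd_of_mod_four_eq_one hm)),
    ZMod.χ₄_nat_one_mod_four hm, one_mul]

theorem jacobiSeq_natCast_sub {n : ℕ} (hn : ∀ p : ℕ, p.Prime → p ∣ n → p % 4 = 1) (j : ℤ) :
    jacobiSeq n (n - j) = jacobiSeq n (n + j) := by
  rw [sub_eq_add_neg, jacobiSeq_natCast_add, jacobiSeq_natCast_add, jacobiSeq_neg hn]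

theorem neg_one_zpow_mul_pred_div_two_add (c j : ℤ) :
    (-1 : ℤˣ) ^ ((c + j) * (c + j - 1) / 2)
      = (-1) ^ j * (-1) ^ ((c - j) * (c - j - 1) / 2) := by
  have hexp : (c + j) * (c + j - 1) / 2 = (c - j) * (c - j - 1) / 2 + (2 * (c * j) - j) := by
    rw [← Int.add_mul_ediv_right _ _ two_ne_zero]
    congr 1
    ring
  rw [hexp, zpow_add, zpow_sub, zpow_mul, Int.units_inv_eq_self,
    show (-1 : ℤˣ) ^ (2 : ℤ) = 1 by decide, one_zpow, one_mul, mul_comm]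

theorem jacobi_negaperiodic_skew_symmetric_general (n : ℕ)
    (hp : ∀ p : ℕ, p.Prime → p ∣ n → p % 4 = 1)
    (x : ℤ → ℤ) (hx : ∀ j : ℤ, x j = jacobiSym j (n / Int.gcd j n))
    (u : ℤ → ℤ)
    (hu : ∀ j : ℤ, u j = (((-1 : ℤˣ) ^ (j * (j - 1) / 2) : ℤˣ) : ℤ) * x j)
    (s : ℕ) (a : ℕ → ℤ) (ha : ∀ k : ℕ, a k = u ((n : ℤ) - (s : ℤ) + (k : ℤ))) :
    ∀ j : ℕ, 1 ≤ j → j ≤ s → a (s + j) = (-1) ^ j * a (s - j) := by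
  intro j _ hjs
  have hreflect (i : ℤ) : u (n + i) = ((-1 : ℤˣ) ^ i : ℤˣ) * u (n - i) := by
    have hxi : x (n - i) = x (n + i) := by
      rw [hx, hx]
      exact jacobiSeq_natCast_sub hp i
    rw [hu, hu, hxi, neg_one_zpow_mul_pred_div_two_add, Units.val_mul, mul_assoc]
  have hplus : a (s + j) = u (n + j) := by
    rw [ha]; push_cast; ring_nf
  have hminus : a (s - j) = u (n - j) := by
    rw [ha, Nat.cast_sub hjs]; ring_nf
  rw [hplus, hminus, hreflect, zpow_natCast]
  norm_cast

theorem jacobi_negaperiodic_skew_symmetric (n : ℕ) (hn : 0 < n) (hodd : Odd n)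
    (hsf : Squarefree n) (hp : ∀ p : ℕ, p.Prime → p ∣ n → p % 4 = 1)
    (x : ℤ → ℤ) (hx : ∀ j : ℤ, x j = jacobiSym j (n / Int.gcd j n))
    (u : ℤ → ℤ)
    (hu : ∀ j : ℤ, u j = (((-1 : ℤˣ) ^ (j * (j - 1) / 2) : ℤˣ) : ℤ) * x j)
    (s : ℕ) (a : ℕ → ℤ) (ha : ∀ k : ℕ, a k = u ((n : ℤ) - (s : ℤ) + (k : ℤ))) :
    ∀ j : ℕ, 1 ≤ j → j ≤ s → a (s + j) = (-1) ^ j * a (s - j) :=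
  jacobi_negaperiodic_skew_symmetric_general n hp x hx u hu s a ha
end

section
/- Define h : ℝ_{>0} → ℝ by 1/h(T) = 1 − 2T/3 + 4 ∑_{m=1}^{∞} max(0, 1 − m/T)^2. Then the unique global maximum of h on (0, ∞) is attained at T_b, the middle root of x^3 − 12x + 12, and h(T_b) is the largest root of 7x^3 − 33x^2 + 33x − 3. -/
/-!
Let `g = 1 / h` (`recipH`). For `n ≤ T ≤ n + 1` only the first `n` terms of the sum survive, so
`g` has a closed form on each such interval. It gives `g T ≥ 1 / 3` for `T ≤ 1` and `g T > 1 / 2`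
for `T ≥ 2`. On `[1, 2]`, `g T = 5 - 2T/3 - 8/T + 4/T²` has derivative `-2 (T³ - 12T + 12) / (3T³)`,
so its strict minimum there is at the middle root `T_b ≈ 1.1157` of `p = X³ - 12X + 12` (located
by `p'(T_b) = (T_b - x) (T_b - y) < 0` for the other roots `x < T_b < y`), where `g T_b < 1 / 3`.
Eliminating `T_b` from `h T_b = T_b² / (5T_b² - 16T_b + 12)` gives the cubic for `h T_b`, and since
`h T_b > 3` it is the largest root.
-/

lemma three_mul_sq_add_neg_of_middle_root {p q x t y : ℝ} (hx : x ^ 3 + p * x + q = 0)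
    (ht : t ^ 3 + p * t + q = 0) (hy : y ^ 3 + p * y + q = 0) (hxt : x < t) (hty : t < y) :
    3 * t ^ 2 + p < 0 := by
  have hx' : x ^ 2 + x * t + t ^ 2 + p = 0 := by
    have : (x - t) * (x ^ 2 + x * t + t ^ 2 + p) = 0 := by linear_combination hx - ht
    exact (mul_eq_zero.mp this).resolve_left (sub_ne_zero.mpr hxt.ne)
  have hy' : y ^ 2 + y * t + t ^ 2 + p = 0 := by
    have : (y - t) * (y ^ 2 + y * t + t ^ 2 + p) = 0 := by linear_combination hy - ht
    exact (mul_eq_zero.mp this).resolve_left (sub_ne_zero.mpr hty.ne')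
  have hsum : x + y + t = 0 := by
    have : (y - x) * (x + y + t) = 0 := by linear_combination hy' - hx'
    exact (mul_eq_zero.mp this).resolve_left (sub_ne_zero.mpr (hxt.trans hty).ne')
  have : 3 * t ^ 2 + p = (t - x) * (t - y) := by linear_combination hx' - (x - t) * hsum
  rw [this]
  exact mul_neg_of_pos_of_neg (by linarith) (by linarith)

lemma middle_root_bounds {t : ℝ} (ht : t ^ 3 - 12 * t + 12 = 0) (hsq : 3 * t ^ 2 - 12 < 0) :
    1.11 < t ∧ t < 1.12 := by
  have h₁ : -2 < t := by nlinarith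
  have h₂ : t < 2 := by nlinarith
  constructor <;> nlinarith [sq_nonneg (t - 1.11), sq_nonneg (t - 1.12)]

lemma cubic_eq_zero_of_mul_eq_sq {t a : ℝ} (ht : t ^ 3 - 12 * t + 12 = 0)
    (hd : 5 * t ^ 2 - 16 * t + 12 ≠ 0) (ha : a * (5 * t ^ 2 - 16 * t + 12) = t ^ 2) :
    7 * a ^ 3 - 33 * a ^ 2 + 33 * a - 3 = 0 := by
  set d := 5 * t ^ 2 - 16 * t + 12
  have : d ^ 3 * (7 * a ^ 3 - 33 * a ^ 2 + 33 * a - 3) = 0 := by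
    linear_combination (7 * ((a * d) ^ 2 + a * d * t ^ 2 + t ^ 4) - 33 * d * (a * d + t ^ 2)
      + 33 * d ^ 2) * ha + (292 * t ^ 3 - 1152 * t ^ 2 + 1296 * t - 432) * ht
  exact (mul_eq_zero.mp this).resolve_left (pow_ne_zero 3 hd)

lemma le_of_cubic_eq_zero {a z : ℝ} (ha : 7 * a ^ 3 - 33 * a ^ 2 + 33 * a - 3 = 0) (ha3 : 3 < a)
    (hz : 7 * z ^ 3 - 33 * z ^ 2 + 33 * z - 3 = 0) : z ≤ a := by
  by_contra! hza
  have hq : 0 < 7 * z ^ 2 + (7 * a - 33) * z + 7 * a ^ 2 - 33 * a + 33 := by nlinarith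
  have : (z - a) * (7 * z ^ 2 + (7 * a - 33) * z + 7 * a ^ 2 - 33 * a + 33) = 0 := by
    linear_combination hz - ha
  nlinarith [mul_pos (sub_pos.mpr hza) hq]

noncomputable def recipH (T : ℝ) : ℝ :=
  1 - 2 * T / 3 + 4 * ∑' m : ℕ, (max 0 (1 - ((m : ℝ) + 1) / T)) ^ 2

lemma sum_range_one_sub_div_sq {T : ℝ} (hT : T ≠ 0) (n : ℕ) :
    ∑ m ∈ Finset.range n, (1 - ((m : ℝ) + 1) / T) ^ 2
      = n - n * (n + 1) / T + n * (n + 1) * (2 * n + 1) / (6 * T ^ 2) := by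
  induction n with
  | zero => simp
  | succ k ih =>
    rw [Finset.sum_range_succ, ih]
    push_cast
    field_simp
    ring

lemma tsum_max_zero_one_sub_div_sq {T : ℝ} (hT : 0 < T) {n : ℕ} (hnT : (n : ℝ) ≤ T)
    (hTn : T ≤ n + 1) :
    ∑' m : ℕ, (max 0 (1 - ((m : ℝ) + 1) / T)) ^ 2
      = n - n * (n + 1) / T + n * (n + 1) * (2 * n + 1) / (6 * T ^ 2) := by
  rw [← sum_range_one_sub_div_sq hT.ne' n, tsum_eq_sum (s := Finset.range n)]
  · refine Finset.sum_congr rfl fun m hm => ?_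
    have hm : (m : ℝ) + 1 ≤ n := by exact_mod_cast Finset.mem_range.mp hm
    rw [max_eq_right (sub_nonneg.mpr ((div_le_one hT).mpr (by linarith)))]
  · intro m hm
    have hm : (n : ℝ) ≤ m := by exact_mod_cast not_lt.mp (Finset.mem_range.not.mp hm)
    rw [max_eq_left (sub_nonpos.mpr ((le_div_iff₀ hT).mpr (by linarith)))]
    norm_num

lemma recipH_eq_of_le_of_le {T : ℝ} (hT : 0 < T) {n : ℕ} (hnT : (n : ℝ) ≤ T)
    (hTn : T ≤ n + 1) :
    recipH T =
      1 - 2 * T / 3 + 4 * (n - n * (n + 1) / T + n * (n + 1) * (2 * n + 1) / (6 * T ^ 2)) := by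
  rw [recipH, tsum_max_zero_one_sub_div_sq hT hnT hTn]

lemma recipH_of_le_one {T : ℝ} (hT : 0 < T) (hT1 : T ≤ 1) : recipH T = 1 - 2 * T / 3 := by
  rw [recipH_eq_of_le_of_le (n := 0) hT (by simpa using hT.le) (by simpa using hT1)]
  simp

lemma recipH_of_one_le_of_le_two {T : ℝ} (hT1 : 1 ≤ T) (hT2 : T ≤ 2) :
    recipH T = 5 - 2 * T / 3 - 8 / T + 4 / T ^ 2 := by
  have hT : 0 < T := by linarith
  rw [recipH_eq_of_le_of_le (n := 1) hT (by simpa using hT1) (by norm_num; linarith)]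
  field_simp
  ring

lemma cubic_pos_of_two_le {n s : ℝ} (hn : 2 ≤ n) (hs0 : 0 ≤ s) (hs1 : s ≤ 1) :
    0 < 4 * n ^ 3 - 9 * n ^ 2 + 4 * n + (12 * n ^ 2 - 18 * n) * s + (12 * n + 3) * s ^ 2
      - 4 * s ^ 3 := by
  have h₀ : 0 < 4 * n ^ 3 - 9 * n ^ 2 + 4 * n := by
    nlinarith [mul_nonneg (by linarith : (0:ℝ) ≤ n) (sq_nonneg (n - 2))]
  have h₁ : 0 ≤ (12 * n ^ 2 - 18 * n) * s := mul_nonneg (by nlinarith) hs0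
  have h₂ : 0 ≤ s ^ 2 * (12 * n + 3 - 4 * s) := mul_nonneg (sq_nonneg s) (by linarith)
  nlinarith

lemma half_lt_recipH {T : ℝ} (hT : 2 < T) : 1 / 2 < recipH T := by
  set n := ⌊T⌋₊
  have hnT : (n : ℝ) ≤ T := Nat.floor_le (by linarith)
  have hTn : T < n + 1 := Nat.lt_floor_add_one T
  have hn : (2 : ℝ) ≤ n := by exact_mod_cast Nat.le_floor (by exact_mod_cast hT.le)
  rw [recipH_eq_of_le_of_le (by linarith) hnT hTn.le]
  have hpos := cubic_pos_of_two_le hn (sub_nonneg.mpr hnT) (by linarith : T - n ≤ 1)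
  have hT0 : 0 < T := by linarith
  rw [← sub_pos]
  have : 1 - 2 * T / 3 + 4 * (n - n * (n + 1) / T + n * (n + 1) * (2 * n + 1) / (6 * T ^ 2))
        - 1 / 2
      = (4 * n ^ 3 - 9 * n ^ 2 + 4 * n + (12 * n ^ 2 - 18 * n) * (T - n)
        + (12 * n + 3) * (T - n) ^ 2 - 4 * (T - n) ^ 3) / (6 * T ^ 2) := by
    field_simp
    ring
  rw [this]
  positivity

lemma recipH_lt_recipH_of_one_le_of_le_two {t T : ℝ} (ht : t ^ 3 - 12 * t + 12 = 0)
    (ht₁ : 1 ≤ t) (ht₂ : t ^ 2 < 3) (hT₁ : 1 ≤ T) (hT₂ : T ≤ 2) (hne : T ≠ t) :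
    recipH t < recipH T := by
  have ht₀ : 0 < t := by linarith
  have hT₀ : 0 < T := by linarith
  rw [recipH_of_one_le_of_le_two ht₁ (by nlinarith), recipH_of_one_le_of_le_two hT₁ hT₂,
    ← sub_pos]
  have : 5 - 2 * T / 3 - 8 / T + 4 / T ^ 2 - (5 - 2 * t / 3 - 8 / t + 4 / t ^ 2)
      = 2 * (T - t) ^ 2 * (6 - T * t ^ 2) / (3 * T ^ 2 * t ^ 2) := by
    field_simp
    linear_combination (2 * T * t - 2 * T ^ 2) * ht
  rw [this]
  have : 0 < (T - t) ^ 2 := pow_two_pos_of_ne_zero (sub_ne_zero.mpr hne)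
  have : 0 < 6 - T * t ^ 2 := by nlinarith
  positivity

lemma recipH_mul_sq_of_cubic_root {t : ℝ} (ht : t ^ 3 - 12 * t + 12 = 0) (ht₁ : 1 ≤ t)
    (ht₂ : t ≤ 2) :
    recipH t * t ^ 2 = 5 * t ^ 2 - 16 * t + 12 := by
  rw [recipH_of_one_le_of_le_two ht₁ ht₂]
  field_simp
  linear_combination (-2) * ht

lemma recipH_lt_recipH {t T : ℝ} (ht : t ^ 3 - 12 * t + 12 = 0) (ht₁ : 1.11 < t)
    (ht₂ : t < 1.12) (hT : 0 < T) (hne : T ≠ t) : recipH t < recipH T := by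
  have hthird : recipH t < 1 / 3 := by
    have := recipH_mul_sq_of_cubic_root ht (by linarith) (by linarith)
    nlinarith
  rcases le_or_gt T 1 with hT₁ | hT₁
  · rw [recipH_of_le_one hT hT₁]
    linarith
  rcases le_or_gt T 2 with hT₂ | hT₂
  · exact recipH_lt_recipH_of_one_le_of_le_two ht (by linarith) (by nlinarith) hT₁.le hT₂ hne
  · linarith [half_lt_recipH hT₂]

theorem h_max_at_middle_root (h : ℝ → ℝ)
    (hh : ∀ T : ℝ, 0 < T →
      1 / h T = 1 - 2 * T / 3 + 4 * ∑' m : ℕ, (max 0 (1 - ((m : ℝ) + 1) / T)) ^ 2)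
    (Tb : ℝ) (hroot : Tb ^ 3 - 12 * Tb + 12 = 0)
    (hmid : ∃ x y : ℝ, x ^ 3 - 12 * x + 12 = 0 ∧ y ^ 3 - 12 * y + 12 = 0 ∧
      x < Tb ∧ Tb < y) :
    (∀ T : ℝ, 0 < T → T ≠ Tb → h T < h Tb) ∧
      (7 * (h Tb) ^ 3 - 33 * (h Tb) ^ 2 + 33 * (h Tb) - 3 = 0 ∧
        ∀ y : ℝ, 7 * y ^ 3 - 33 * y ^ 2 + 33 * y - 3 = 0 → y ≤ h Tb) := by
  obtain ⟨x, y, hx, hy, hxTb, hTby⟩ := hmid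
  obtain ⟨hTb₁, hTb₂⟩ : 1.11 < Tb ∧ Tb < 1.12 := middle_root_bounds hroot
    (three_mul_sq_add_neg_of_middle_root (q := 12) (by linear_combination hx)
      (by linear_combination hroot) (by linear_combination hy) hxTb hTby)
  have hh' : ∀ T, 0 < T → h T = 1 / recipH T := fun T hT => by
    rw [show recipH T = 1 / h T from (hh T hT).symm, one_div_one_div]
  have hTb₀ : 0 < Tb := by linarith
  have hval := recipH_mul_sq_of_cubic_root hroot (by linarith) (by linarith)
  have hpos : 0 < recipH Tb := by nlinarith
  have hhTb : h Tb * (5 * Tb ^ 2 - 16 * Tb + 12) = Tb ^ 2 := by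
    rw [hh' Tb hTb₀, ← hval]
    field_simp
  have hcubic := cubic_eq_zero_of_mul_eq_sq hroot (by nlinarith) hhTb
  refine ⟨fun T hT hne => ?_, hcubic, fun z hz => le_of_cubic_eq_zero hcubic ?_ hz⟩
  · rw [hh' T hT, hh' Tb hTb₀]
    exact one_div_lt_one_div_of_lt hpos (recipH_lt_recipH hroot hTb₁ hTb₂ hT hne)
  · nlinarith
end
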